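/- arXiv:2207.02654 — 11 statements merged into one kernel-verified Lean document; each statement's English description precedes it below -/
import Mathlib

section
/- Let X₁,…,Xₙ be ℕ-valued random variables on a probability space with E[X₁] < ∞, and set S = X₁+⋯+Xₙ and S₋₁ = X₂+⋯+Xₙ. Fix t ∈ [0,1) and define g(s) = E[s^{X₁} · t^{S₋₁}] for s ∈ [0,1). Then g is differentiable at s = t and t · g'(t) = ∑_{k=0}^∞ t^k · E[X₁ · 1_{\{S=k\}}]; in other words, the ordinary generating function of the sequence of expected allocations of X₁ equals the partial derivative of the joint probability generating function of (X₁, S₋₁) in its first argument, multiplied by t and evaluated with both arguments equal to t. -/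
/-! Near `t` every `|s| ≤ 1`, so the `s`-derivative `X₁ s^(X₁-1) t^S₋₁` of the integrand is
dominated by the integrable `X₁`, and one may differentiate under the integral sign. Multiplying by
`t` turns the derivative into `E[X₁ t^(X₁ + S₋₁)] = E[X₁ t^S]`, and splitting this expectation
along the fibres `{S = k}` yields the generating series. -/

open MeasureTheory ProbabilityTheory

theorem norm_pow_le_one_of_abs_le_one {s : ℝ} (hs : |s| ≤ 1) (m : ℕ) : ‖s ^ m‖ ≤ 1 := by
  simpa using pow_le_one₀ (abs_nonneg s) hs

section

variable {Ω : Type*} [MeasurableSpace Ω] {μ : Measure Ω}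

theorem hasSum_setIntegral_fiber {ι E : Type*} [Countable ι] [MeasurableSpace ι]
    [MeasurableSingletonClass ι] [NormedAddCommGroup E] [NormedSpace ℝ E]
    {S : Ω → ι} (hS : Measurable S) {f : Ω → E} (hf : Integrable f μ) :
    HasSum (fun k => ∫ ω in S ⁻¹' {k}, f ω ∂μ) (∫ ω, f ω ∂μ) := by
  have hcover : (⋃ k, S ⁻¹' {k}) = Set.univ :=
    Set.eq_univ_of_forall fun ω => Set.mem_iUnion.2 ⟨S ω, rfl⟩
  simpa [hcover] using hasSum_integral_iUnion (fun k => hS (measurableSet_singleton k))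
    (pairwise_disjoint_fiber S) (hcover ▸ hf.integrableOn)

theorem integral_smul_comp_eq_tsum {ι E : Type*} [Countable ι] [MeasurableSpace ι]
    [MeasurableSingletonClass ι] [NormedAddCommGroup E] [NormedSpace ℝ E]
    {S : Ω → ι} (hS : Measurable S) {f : Ω → E} (φ : ι → ℝ)
    (hφf : Integrable (fun ω => φ (S ω) • f ω) μ) :
    ∫ ω, φ (S ω) • f ω ∂μ = ∑' k, φ k • ∫ ω in S ⁻¹' {k}, f ω ∂μ := by
  rw [← (hasSum_setIntegral_fiber hS hφf).tsum_eq]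
  refine tsum_congr fun k => ?_
  rw [← integral_smul]
  exact setIntegral_congr_fun (hS (measurableSet_singleton k)) fun ω hω => by rw [hω]

theorem hasDerivAt_integral_pow_mul [IsFiniteMeasure μ] {N : Ω → ℕ} (hN : Measurable N)
    (hN_int : Integrable (fun ω => (N ω : ℝ)) μ) {Y : Ω → ℝ} (hY : AEStronglyMeasurable Y μ)
    {C : ℝ} (hYC : ∀ᵐ ω ∂μ, ‖Y ω‖ ≤ C) {t : ℝ} (ht : |t| < 1) :
    HasDerivAt (fun s => ∫ ω, s ^ N ω * Y ω ∂μ) (∫ ω, N ω * t ^ (N ω - 1) * Y ω ∂μ) t := by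
  have hball : ∀ s ∈ Metric.ball t (1 - |t|), |s| ≤ 1 := fun s hs => by
    have := abs_sub_abs_le_abs_sub s t
    rw [Metric.mem_ball, Real.dist_eq] at hs
    linarith
  have hF_meas : ∀ s : ℝ, AEStronglyMeasurable (fun ω => s ^ N ω * Y ω) μ := fun s =>
    (measurable_from_top.comp hN).aestronglyMeasurable.mul hY
  have hF'_meas : AEStronglyMeasurable (fun ω => N ω * t ^ (N ω - 1) * Y ω) μ :=
    ((measurable_from_top (f := fun m : ℕ => (m : ℝ) * t ^ (m - 1))).comp
      hN).aestronglyMeasurable.mul hY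
  refine (hasDerivAt_integral_of_dominated_loc_of_deriv_le (bound := fun ω => C * N ω)
    (Metric.ball_mem_nhds t (sub_pos.2 ht)) (.of_forall hF_meas)
    ((integrable_const C).mono' (hF_meas t) ?_)
    hF'_meas ?_ (hN_int.const_mul C)
    (.of_forall fun ω s _ => (hasDerivAt_pow (N ω) s).mul_const (Y ω))).2
  · filter_upwards [hYC] with ω hω
    rw [norm_mul]
    simpa using
      mul_le_mul (norm_pow_le_one_of_abs_le_one ht.le (N ω)) hω (norm_nonneg _) zero_le_one
  · filter_upwards [hYC] with ω hω s hs
    rw [norm_mul, norm_mul, Real.norm_natCast]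
    calc (N ω : ℝ) * ‖s ^ (N ω - 1)‖ * ‖Y ω‖ ≤ N ω * 1 * C := by
          gcongr
          exact norm_pow_le_one_of_abs_le_one (hball s hs) _
      _ = C * N ω := by ring

end

/-- The ordinary generating function of the sequence of expected allocations
`E[X₁ · 1_{S=k}]`, `k ∈ ℕ`, equals the partial derivative of the joint pgf of `(X₁, S₋₁)`
in its first argument, times `t`, evaluated with both arguments equal to `t ∈ [0,1)`. -/
theorem ogf_expected_allocation_eq_partial_deriv_pgf
    {Ω : Type*} [MeasurableSpace Ω] (μ : Measure Ω) [IsProbabilityMeasure μ]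
    (n : ℕ) (X : Fin (n + 1) → Ω → ℕ) (hX : ∀ i, Measurable (X i))
    (hint : Integrable (fun ω => (X 0 ω : ℝ)) μ)
    (S Sm : Ω → ℕ)
    (hS : ∀ ω, S ω = ∑ i, X i ω)
    (hSm : ∀ ω, Sm ω = ∑ i : Fin n, X i.succ ω)
    (t : ℝ) (ht : t ∈ Set.Ico (0 : ℝ) 1)
    (g : ℝ → ℝ) (hg : ∀ s, g s = ∫ ω, s ^ (X 0 ω) * t ^ (Sm ω) ∂μ) :
    DifferentiableAt ℝ g t ∧
      t * deriv g t = ∑' k : ℕ, t ^ k * ∫ ω in {ω | S ω = k}, (X 0 ω : ℝ) ∂μ := by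
  obtain rfl : g = _ := funext hg
  have hS_meas : Measurable S := by rw [funext hS]; fun_prop
  have hSm_meas : Measurable Sm := by rw [funext hSm]; fun_prop
  have hS_eq : ∀ ω, S ω = X 0 ω + Sm ω := fun ω => by rw [hS, hSm, Fin.sum_univ_succ]
  have ht_abs : |t| < 1 := abs_lt.2 ⟨by linarith [ht.1], ht.2⟩
  have hpow_le : ∀ m : ℕ, ‖t ^ m‖ ≤ 1 := norm_pow_le_one_of_abs_le_one ht_abs.le
  have hderiv := hasDerivAt_integral_pow_mul (Y := fun ω => t ^ Sm ω) (hX 0) hint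
    (measurable_from_top.comp hSm_meas).aestronglyMeasurable
    (.of_forall fun ω => hpow_le (Sm ω)) ht_abs
  refine ⟨hderiv.differentiableAt, ?_⟩
  have hshift : ∀ ω, t * (X 0 ω * t ^ (X 0 ω - 1) * t ^ Sm ω) = t ^ S ω • (X 0 ω : ℝ) := by
    intro ω
    rcases eq_or_ne (X 0 ω) 0 with h | h
    · simp [h]
    · rw [hS_eq, pow_add, ← mul_pow_sub_one h, smul_eq_mul]
      ring
  calc t * deriv _ t = ∫ ω, t ^ S ω • (X 0 ω : ℝ) ∂μ := by
        rw [hderiv.deriv, ← integral_const_mul]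
        exact integral_congr_ae (.of_forall hshift)
    _ = _ := integral_smul_comp_eq_tsum hS_meas (fun k => t ^ k)
        (hint.bdd_mul (measurable_from_top.comp hS_meas).aestronglyMeasurable
          (.of_forall fun ω => hpow_le (S ω)))
end

section
/- Let M be an ℕ-valued random variable whose probability mass function f_M satisfies the Katz recursion f_M(k) = (a + b/k) · f_M(k−1) for all integers k ≥ 1, where a < 1 and b > 0. Then the probability generating function P_M(t) = ∑_{k=0}^∞ f_M(k) t^k satisfies the differential equation P'_M(t) = (a+b)/(1 − a t) · P_M(t) for every t with |t| < 1 (and a t ≠ 1). -/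
/-!
Write `f k = P(M = k)`. Then `P_M(t) = ∑ f k t^k` is a power series with coefficients in `[0, 1]`,
so on `|t| < 1` it may be differentiated termwise: `P_M'(t) = ∑ (k + 1) f (k + 1) t^k`.
The Katz recursion reads `(k + 1) f (k + 1) = (a k + a + b) f k`, and since
`∑ k f k t^k = t P_M'(t)` this gives `P_M'(t) = a t P_M'(t) + (a + b) P_M(t)`.
-/

open MeasureTheory

section PowerSeries

variable {𝕜 : Type*} [RCLike 𝕜] {c : ℕ → 𝕜} {C : ℝ} {t : 𝕜}

theorem summable_mul_pow_of_norm_le (hc : ∀ k, ‖c k‖ ≤ C) (ht : ‖t‖ < 1) :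
    Summable fun k : ℕ => c k * t ^ k := by
  refine .of_norm_bounded ((summable_geometric_of_lt_one (norm_nonneg t) ht).mul_left C) ?_
  intro k
  rw [norm_mul, norm_pow]
  exact mul_le_mul_of_nonneg_right (hc k) (by positivity)

theorem summable_natCast_mul_mul_pow_of_norm_le (hc : ∀ k, ‖c k‖ ≤ C) (ht : ‖t‖ < 1) :
    Summable fun k : ℕ => (k : 𝕜) * c k * t ^ k := by
  refine .of_norm_bounded
    ((summable_pow_mul_geometric_of_norm_lt_one 1 (r := ‖t‖) (by rwa [norm_norm])).mul_left C) ?_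
  intro k
  rw [norm_mul, norm_mul, norm_pow, RCLike.norm_natCast, pow_one]
  calc (k : ℝ) * ‖c k‖ * ‖t‖ ^ k = ‖c k‖ * ((k : ℝ) * ‖t‖ ^ k) := by ring
    _ ≤ C * ((k : ℝ) * ‖t‖ ^ k) := mul_le_mul_of_nonneg_right (hc k) (by positivity)

theorem summable_natCast_mul_pow_sub_one {r : ℝ} (hr0 : 0 ≤ r) (hr : r < 1) :
    Summable fun k : ℕ => (k : ℝ) * r ^ (k - 1) := by
  rw [← summable_nat_add_iff 1]
  have hgeom := summable_geometric_of_lt_one hr0 hr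
  have hmul := summable_pow_mul_geometric_of_norm_lt_one 1
    (by rwa [Real.norm_eq_abs, abs_of_nonneg hr0])
  refine (hmul.add hgeom).congr fun k => ?_
  simp only [Nat.add_sub_cancel, Nat.cast_add, Nat.cast_one, pow_one]
  ring

theorem hasDerivAt_tsum_mul_pow_of_norm_le (hc : ∀ k, ‖c k‖ ≤ C) (ht : ‖t‖ < 1) :
    HasDerivAt (fun s => ∑' k, c k * s ^ k) (∑' k : ℕ, ((k : 𝕜) + 1) * c (k + 1) * t ^ k) t := by
  obtain ⟨r, htr, hr⟩ := exists_between ht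
  have hu := (summable_natCast_mul_pow_sub_one ((norm_nonneg t).trans htr.le) hr).mul_left C
  have hball : t ∈ Metric.ball (0 : 𝕜) r := by rwa [mem_ball_zero_iff]
  have hbound : ∀ k, ∀ y ∈ Metric.ball (0 : 𝕜) r,
      ‖c k * ((k : 𝕜) * y ^ (k - 1))‖ ≤ C * ((k : ℝ) * r ^ (k - 1)) := by
    intro k y hy
    rw [mem_ball_zero_iff] at hy
    rw [norm_mul, norm_mul, norm_pow, RCLike.norm_natCast]
    gcongr
    · exact (norm_nonneg _).trans (hc k)
    · exact hc k
  have hderiv := hasDerivAt_tsum_of_isPreconnected hu Metric.isOpen_ball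
    (convex_ball (0 : 𝕜) r).isPreconnected (fun k y _ => (hasDerivAt_pow k y).const_mul (c k))
    hbound hball (summable_mul_pow_of_norm_le hc ht) hball
  rw [(hu.of_norm_bounded fun k => hbound k t hball).tsum_eq_zero_add] at hderiv
  simp only [CharP.cast_eq_zero, zero_mul, mul_zero, zero_add, Nat.add_sub_cancel, Nat.cast_add,
    Nat.cast_one] at hderiv
  exact hderiv.congr_deriv (tsum_congr fun k => by ring)

end PowerSeries

theorem integral_pow_eq_tsum {𝕜 : Type*} [RCLike 𝕜] {Ω : Type*} [MeasurableSpace Ω]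
    {μ : Measure Ω} [IsFiniteMeasure μ] {M : Ω → ℕ} (hM : Measurable M) {s : 𝕜} (hs : ‖s‖ ≤ 1) :
    ∫ ω, s ^ M ω ∂μ = ∑' k, μ.real {ω | M ω = k} • s ^ k := by
  have hint : Integrable (fun n : ℕ => s ^ n) (μ.map M) :=
    .of_bound (C := 1) (measurable_const.pow measurable_id).aestronglyMeasurable
      (.of_forall fun n => by simpa [norm_pow] using pow_le_one₀ (norm_nonneg s) hs)
  rw [← integral_map hM.aemeasurable hint.aestronglyMeasurable, integral_countable hint]
  simp only [measureReal_def, Measure.map_apply hM (measurableSet_singleton _)]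
  rfl

theorem katz_tsum_identity {f : ℕ → ℝ} {a b t : ℝ}
    (hkatz : ∀ k : ℕ, f (k + 1) = (a + b / (k + 1)) * f k)
    (hP : Summable fun k : ℕ => f k * t ^ k) (hD : Summable fun k : ℕ => (k : ℝ) * f k * t ^ k) :
    ∑' k : ℕ, ((k : ℝ) + 1) * f (k + 1) * t ^ k
      = a * t * ∑' k : ℕ, ((k : ℝ) + 1) * f (k + 1) * t ^ k + (a + b) * ∑' k, f k * t ^ k := by
  have hterm : ∀ k : ℕ, ((k : ℝ) + 1) * f (k + 1) * t ^ k
      = a * ((k : ℝ) * f k * t ^ k) + (a + b) * (f k * t ^ k) := by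
    intro k
    rw [hkatz]
    field_simp
    ring
  have hshift : ∑' k : ℕ, (k : ℝ) * f k * t ^ k
      = t * ∑' k : ℕ, ((k : ℝ) + 1) * f (k + 1) * t ^ k := by
    rw [hD.tsum_eq_zero_add, ← tsum_mul_left]
    simp only [CharP.cast_eq_zero, zero_mul, zero_add, Nat.cast_add, Nat.cast_one]
    exact tsum_congr fun k => by ring
  calc ∑' k : ℕ, ((k : ℝ) + 1) * f (k + 1) * t ^ k
      = ∑' k : ℕ, (a * ((k : ℝ) * f k * t ^ k) + (a + b) * (f k * t ^ k)) := tsum_congr hterm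
    _ = a * ∑' k : ℕ, (k : ℝ) * f k * t ^ k + (a + b) * ∑' k, f k * t ^ k := by
      rw [(hD.mul_left a).tsum_add (hP.mul_left (a + b)), tsum_mul_left, tsum_mul_left]
    _ = _ := by rw [hshift]; ring

theorem katz_pgf_differential_equation_general
    {Ω : Type*} [MeasurableSpace Ω] (μ : Measure Ω) [IsProbabilityMeasure μ]
    (M : Ω → ℕ) (hM : Measurable M)
    (a b : ℝ)
    (hkatz : ∀ k : ℕ, (μ {ω | M ω = k + 1}).toReal
      = (a + b / (k + 1)) * (μ {ω | M ω = k}).toReal)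
    (t : ℝ) (ht : |t| < 1) (hat : a * t ≠ 1) :
    HasDerivAt (fun s : ℝ => ∫ ω, s ^ (M ω) ∂μ)
      ((a + b) / (1 - a * t) * ∫ ω, t ^ (M ω) ∂μ) t := by
  set f : ℕ → ℝ := fun k => μ.real {ω | M ω = k}
  have hf : ∀ k, ‖f k‖ ≤ 1 := fun k => by
    rw [Real.norm_of_nonneg measureReal_nonneg]; exact measureReal_le_one
  have hP : ∀ s : ℝ, |s| ≤ 1 → ∫ ω, s ^ M ω ∂μ = ∑' k, f k * s ^ k :=
    fun s hs => integral_pow_eq_tsum hM hs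
  have hderiv : HasDerivAt (fun s : ℝ => ∫ ω, s ^ M ω ∂μ)
      (∑' k : ℕ, ((k : ℝ) + 1) * f (k + 1) * t ^ k) t :=
    (hasDerivAt_tsum_mul_pow_of_norm_le hf ht).congr_of_eventuallyEq <|
      (continuous_abs.continuousAt.eventually_lt continuousAt_const ht).mono fun s hs => hP s hs.le
  have hkey := katz_tsum_identity hkatz (summable_mul_pow_of_norm_le hf ht)
    (summable_natCast_mul_mul_pow_of_norm_le hf ht)
  rw [hP t ht.le]
  convert hderiv using 1
  have h1at : 1 - a * t ≠ 0 := sub_ne_zero.mpr hat.symm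
  field_simp
  linarith

/-- If `M` is ℕ-valued and its pmf satisfies the Katz recursion
`f_M(k) = (a + b/k) f_M(k-1)` for `k ≥ 1` with `a < 1` and `b > 0`, then its pgf satisfies
`P'_M(t) = (a+b)/(1 - a t) · P_M(t)` for every `t` with `|t| < 1` and `a t ≠ 1`. -/
theorem katz_pgf_differential_equation
    {Ω : Type*} [MeasurableSpace Ω] (μ : Measure Ω) [IsProbabilityMeasure μ]
    (M : Ω → ℕ) (hM : Measurable M)
    (a b : ℝ) (ha : a < 1) (hb : 0 < b)
    (hkatz : ∀ k : ℕ, (μ {ω | M ω = k + 1}).toReal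
      = (a + b / (k + 1)) * (μ {ω | M ω = k}).toReal)
    (t : ℝ) (ht : |t| < 1) (hat : a * t ≠ 1) :
    HasDerivAt (fun s : ℝ => ∫ ω, s ^ (M ω) ∂μ)
      ((a + b) / (1 - a * t) * ∫ ω, t ^ (M ω) ∂μ) t :=
  katz_pgf_differential_equation_general μ M hM a b hkatz t ht hat
end

section
/- Let X₁,…,Xₙ be ℕ-valued random variables on a probability space with S = X₁+⋯+Xₙ and S₋₁ = X₂+⋯+Xₙ. Suppose X₁ follows a Katz distribution with parameters a and b, where |a| < 1 and b > 0, and that X₁ is independent of S₋₁. Then for every integer k ≥ 1, E[X₁ · 1_{\{S=k\}}] = (a+b) · ∑_{j=0}^{k−1} a^j · P(S = k−1−j). -/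
open MeasureTheory ProbabilityTheory Finset

/-!
Independence makes the law of `S = X₀ + S₋₁` the convolution of the laws `f` of `X₀` and `g`
of `S₋₁`, and `E[X₀; S = k] = T k := ∑_{i + m = k} i f(i) g(m)`. Peeling off the `i = 0` term and
using the Katz recursion `(i + 1) f(i + 1) = (a (i + 1) + b) f(i)` gives the first-order recurrence
`T (k + 1) = a T k + (a + b) P(S = k)`, which unrolls from `T 0 = 0` to the stated formula.
-/

theorem eq_sum_pow_mul_of_succ_eq {R : Type*} [CommSemiring R] {a : R} {u c : ℕ → R}
    (h0 : u 0 = 0) (hsucc : ∀ k, u (k + 1) = a * u k + c k) (k : ℕ) :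
    u k = ∑ j ∈ range k, a ^ j * c (k - 1 - j) := by
  induction k with
  | zero => simp [h0]
  | succ k ih =>
    rw [hsucc, ih, sum_range_succ', mul_sum]
    simp only [pow_succ', mul_assoc, add_tsub_cancel_right, pow_zero, one_mul, tsub_zero]
    congr 2 with j
    congr 3
    omega

section Katz

variable {K : Type*} [Field K] [CharZero K] {a b : K} {f g : ℕ → K}

theorem sum_antidiagonal_fst_mul_succ_of_katz (hf : ∀ i : ℕ, f (i + 1) = (a + b / (i + 1)) * f i)
    (k : ℕ) :
    ∑ p ∈ antidiagonal (k + 1), (p.1 : K) * (f p.1 * g p.2)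
      = a * ∑ p ∈ antidiagonal k, (p.1 : K) * (f p.1 * g p.2)
        + (a + b) * ∑ p ∈ antidiagonal k, f p.1 * g p.2 := by
  rw [Nat.sum_antidiagonal_succ, mul_sum, mul_sum, ← sum_add_distrib]
  simp only [Nat.cast_zero, zero_mul, zero_add, Nat.cast_add, Nat.cast_one, hf]
  refine sum_congr rfl fun p _ => ?_
  have hsucc_ne : (p.1 : K) + 1 ≠ 0 := Nat.cast_add_one_ne_zero p.1
  field_simp
  ring

theorem sum_antidiagonal_fst_mul_of_katz (hf : ∀ i : ℕ, f (i + 1) = (a + b / (i + 1)) * f i)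
    (k : ℕ) :
    ∑ p ∈ antidiagonal k, (p.1 : K) * (f p.1 * g p.2)
      = (a + b) * ∑ j ∈ range k, a ^ j * ∑ p ∈ antidiagonal (k - 1 - j), f p.1 * g p.2 := by
  rw [eq_sum_pow_mul_of_succ_eq (u := fun k => ∑ p ∈ antidiagonal k, (p.1 : K) * (f p.1 * g p.2))
    (by simp) (sum_antidiagonal_fst_mul_succ_of_katz hf), mul_sum]
  exact sum_congr rfl fun j _ => by ring

end Katz

section IndepSum

variable {Ω : Type*} {X Y : Ω → ℕ}

theorem setOf_add_eq_biUnion_antidiagonal (k : ℕ) :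
    {ω | X ω + Y ω = k} = ⋃ p ∈ antidiagonal k, {ω | X ω = p.1} ∩ {ω | Y ω = p.2} := by
  ext ω
  simp

theorem pairwiseDisjoint_antidiagonal_preimage (k : ℕ) :
    Set.PairwiseDisjoint ↑(antidiagonal k) fun p : ℕ × ℕ => {ω | X ω = p.1} ∩ {ω | Y ω = p.2} := by
  intro p hp q hq hpq
  refine Set.disjoint_left.2 fun ω hωp hωq => hpq ?_
  have hp_sum := mem_antidiagonal.1 hp
  have hq_sum := mem_antidiagonal.1 hq
  ext <;> simp_all

variable [MeasurableSpace Ω] {μ : Measure Ω} [IsFiniteMeasure μ]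

theorem setIntegral_add_eq_sum_antidiagonal (hX : Measurable X) (hY : Measurable Y)
    (hXY : IndepFun X Y μ) (φ : ℕ → ℝ) (k : ℕ) :
    ∫ ω in {ω | X ω + Y ω = k}, φ (X ω) ∂μ
      = ∑ p ∈ antidiagonal k, φ p.1 * (μ.real {ω | X ω = p.1} * μ.real {ω | Y ω = p.2}) := by
  have hmeas : ∀ p : ℕ × ℕ, MeasurableSet ({ω | X ω = p.1} ∩ {ω | Y ω = p.2}) := fun p =>
    (hX (measurableSet_singleton _)).inter (hY (measurableSet_singleton _))
  have hconst : ∀ p : ℕ × ℕ, Set.EqOn (fun ω => φ (X ω)) (fun _ => φ p.1)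
      ({ω | X ω = p.1} ∩ {ω | Y ω = p.2}) := fun p ω hω => by simp [hω.1.symm]
  rw [setOf_add_eq_biUnion_antidiagonal, integral_biUnion_finset _ (fun p _ => hmeas p)
    (pairwiseDisjoint_antidiagonal_preimage k)
    (fun p _ => (integrableOn_const (measure_ne_top μ _)).congr_fun (hconst p).symm (hmeas p))]
  refine sum_congr rfl fun p _ => ?_
  have hprod : μ ({ω | X ω = p.1} ∩ {ω | Y ω = p.2}) = μ {ω | X ω = p.1} * μ {ω | Y ω = p.2} :=
    hXY.measure_inter_preimage_eq_mul _ _ (measurableSet_singleton p.1)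
      (measurableSet_singleton p.2)
  rw [setIntegral_congr_fun (hmeas p) (hconst p), setIntegral_const, smul_eq_mul, mul_comm,
    measureReal_def, hprod, ENNReal.toReal_mul, measureReal_def, measureReal_def]

theorem measureReal_add_eq_sum_antidiagonal (hX : Measurable X) (hY : Measurable Y)
    (hXY : IndepFun X Y μ) (k : ℕ) :
    μ.real {ω | X ω + Y ω = k}
      = ∑ p ∈ antidiagonal k, μ.real {ω | X ω = p.1} * μ.real {ω | Y ω = p.2} := by
  simpa [setIntegral_const] using setIntegral_add_eq_sum_antidiagonal hX hY hXY (fun _ => 1) k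

end IndepSum

theorem expected_allocation_katz_general
    {Ω : Type*} [MeasurableSpace Ω] (μ : Measure Ω) [IsProbabilityMeasure μ]
    (n : ℕ) (X : Fin (n + 1) → Ω → ℕ) (hX : ∀ i, Measurable (X i))
    (S Sm : Ω → ℕ)
    (hS : ∀ ω, S ω = ∑ i, X i ω)
    (hSm : ∀ ω, Sm ω = ∑ i : Fin n, X i.succ ω)
    (a b : ℝ)
    (hkatz : ∀ k : ℕ, (μ {ω | X 0 ω = k + 1}).toReal
      = (a + b / (k + 1)) * (μ {ω | X 0 ω = k}).toReal)
    (hindep : IndepFun (X 0) Sm μ) :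
    ∀ k : ℕ, 1 ≤ k →
      ∫ ω in {ω | S ω = k}, (X 0 ω : ℝ) ∂μ
        = (a + b) * ∑ j ∈ Finset.range k, a ^ j * (μ {ω | S ω = k - 1 - j}).toReal := by
  have hS_eq : S = fun ω => X 0 ω + Sm ω := funext fun ω => by
    rw [hS, hSm, Fin.sum_univ_succ]
  have hSm_meas : Measurable Sm := by
    rw [funext hSm]
    exact Finset.measurable_sum _ fun i _ => hX i.succ
  intro k _
  simp only [hS_eq, ← measureReal_def,
    measureReal_add_eq_sum_antidiagonal (hX 0) hSm_meas hindep,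
    setIntegral_add_eq_sum_antidiagonal (hX 0) hSm_meas hindep]
  exact sum_antidiagonal_fst_mul_of_katz (f := fun i => μ.real {ω | X 0 ω = i})
    (g := fun m => μ.real {ω | Sm ω = m}) hkatz k

/-- If `X₁` follows a Katz distribution with parameters `|a| < 1`, `b > 0`
and is independent of `S₋₁`, then for every `k ≥ 1`,
`E[X₁ · 1_{S=k}] = (a+b) ∑_{j=0}^{k-1} a^j P(S = k-1-j)`. -/
theorem expected_allocation_katz
    {Ω : Type*} [MeasurableSpace Ω] (μ : Measure Ω) [IsProbabilityMeasure μ]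
    (n : ℕ) (X : Fin (n + 1) → Ω → ℕ) (hX : ∀ i, Measurable (X i))
    (S Sm : Ω → ℕ)
    (hS : ∀ ω, S ω = ∑ i, X i ω)
    (hSm : ∀ ω, Sm ω = ∑ i : Fin n, X i.succ ω)
    (a b : ℝ) (ha : |a| < 1) (hb : 0 < b)
    (hkatz : ∀ k : ℕ, (μ {ω | X 0 ω = k + 1}).toReal
      = (a + b / (k + 1)) * (μ {ω | X 0 ω = k}).toReal)
    (hindep : IndepFun (X 0) Sm μ) :
    ∀ k : ℕ, 1 ≤ k →
      ∫ ω in {ω | S ω = k}, (X 0 ω : ℝ) ∂μ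
        = (a + b) * ∑ j ∈ Finset.range k, a ^ j * (μ {ω | S ω = k - 1 - j}).toReal :=
  expected_allocation_katz_general μ n X hX S Sm hS hSm a b hkatz hindep
end

section
/- Let X₁,…,Xₙ be ℕ-valued random variables on a probability space with S = X₁+⋯+Xₙ and S₋₁ = X₂+⋯+Xₙ. Suppose X₁ follows a Katz distribution with parameters a and b, where |a| < 1 and b > 0, and that X₁ is independent of S₋₁. Then for every integer k ≥ 1, the expected cumulative allocation satisfies E[X₁ · 1_{\{S≤k\}}] = (a+b) · ∑_{j=0}^{k−1} a^j · P(S ≤ k−1−j). -/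
/-!
Write `T k = E[X₁ · 1_{S ≤ k}]` and `H k = P(S ≤ k)`. Conditioning on `X₁ = m` and using the
independence of `X₁` and `S₋₁`, both are convolutions of the law `f` of `X₁` with the distribution
function `G` of `S₋₁`: `H k = ∑_{m ≤ k} f m G (k - m)` and `T k = ∑_{m ≤ k} m f m G (k - m)`.
The Katz recursion in the form `(m + 1) f (m + 1) = a m f m + (a + b) f m` turns the second into the
first-order recurrence `T (k + 1) = a T k + (a + b) H k` with `T 0 = 0`, whose solution is the
claimed sum.
-/

open MeasureTheory ProbabilityTheory Finset

theorem eq_mul_sum_pow_mul_of_recurrence {T H : ℕ → ℝ} {a c : ℝ} (h₀ : T 0 = 0)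
    (hsucc : ∀ k, T (k + 1) = a * T k + c * H k) (k : ℕ) :
    T k = c * ∑ j ∈ range k, a ^ j * H (k - 1 - j) := by
  induction k with
  | zero => simp [h₀]
  | succ k ih =>
    rw [hsucc, ih, sum_range_succ']
    simp only [Nat.sub_sub, add_tsub_cancel_right, pow_succ, pow_zero, one_mul, tsub_zero]
    rw [mul_add, mul_sum, mul_sum, mul_sum]
    congr 1
    refine sum_congr rfl fun j _ => ?_
    rw [Nat.add_comm 1 j]
    ring

theorem sum_range_succ_mul_convolution_of_katz {f : ℕ → ℝ} {a b : ℝ}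
    (hf : ∀ m : ℕ, f (m + 1) = (a + b / (m + 1)) * f m) (g : ℕ → ℝ) (k : ℕ) :
    ∑ m ∈ range (k + 2), (m : ℝ) * (f m * g (k + 1 - m))
      = a * ∑ m ∈ range (k + 1), (m : ℝ) * (f m * g (k - m))
        + (a + b) * ∑ m ∈ range (k + 1), f m * g (k - m) := by
  have hkatz (m : ℕ) : ((m : ℝ) + 1) * f (m + 1) = a * m * f m + (a + b) * f m := by
    rw [hf]
    field_simp
    ring
  rw [sum_range_succ', mul_sum, mul_sum, ← sum_add_distrib]
  simp only [Nat.cast_zero, zero_mul, add_zero, Nat.cast_succ, Nat.add_sub_add_right]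
  refine sum_congr rfl fun m _ => ?_
  rw [← mul_assoc, hkatz]
  ring

theorem setOf_add_le_eq_biUnion {Ω : Type*} (X Y : Ω → ℕ) (k : ℕ) :
    {ω | X ω + Y ω ≤ k} = ⋃ m ∈ range (k + 1), {ω | X ω = m} ∩ {ω | Y ω ≤ k - m} := by
  ext ω
  simp only [Set.mem_ofPred_eq, Set.mem_iUnion, Set.mem_inter_iff, mem_range, exists_prop]
  constructor
  · intro h
    exact ⟨X ω, by omega, rfl, by omega⟩
  · rintro ⟨m, hm, rfl, h⟩
    omega

namespace ProbabilityTheory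

theorem IndepFun.setIntegral_setOf_add_le {Ω : Type*} [MeasurableSpace Ω] {μ : Measure Ω}
    [IsFiniteMeasure μ] {X Y : Ω → ℕ} (hX : Measurable X) (hY : Measurable Y)
    (hXY : IndepFun X Y μ) (φ : ℕ → ℝ) (k : ℕ) :
    ∫ ω in {ω | X ω + Y ω ≤ k}, φ (X ω) ∂μ
      = ∑ m ∈ range (k + 1), φ m * (μ.real {ω | X ω = m} * μ.real {ω | Y ω ≤ k - m}) := by
  have hmeas : ∀ m ∈ range (k + 1), MeasurableSet ({ω | X ω = m} ∩ {ω | Y ω ≤ k - m}) :=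
    fun m _ => (hX (measurableSet_singleton m)).inter (hY measurableSet_Iic)
  have hdisj : Set.PairwiseDisjoint (range (k + 1) : Set ℕ)
      fun m => {ω | X ω = m} ∩ {ω | Y ω ≤ k - m} :=
    fun m _ m' _ hne => Set.disjoint_left.2 fun ω h h' => hne (h.1.symm.trans h'.1)
  have hconst : ∀ m ∈ range (k + 1), Set.EqOn (fun ω => φ (X ω)) (fun _ => φ m)
      ({ω | X ω = m} ∩ {ω | Y ω ≤ k - m}) := fun m _ ω hω => congrArg φ hω.1
  rw [setOf_add_le_eq_biUnion, integral_biUnion_finset _ hmeas hdisj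
    fun m hm => (integrableOn_const (C := φ m)).congr_fun (hconst m hm).symm (hmeas m hm)]
  refine sum_congr rfl fun m hm => ?_
  have hprod : μ.real ({ω | X ω = m} ∩ {ω | Y ω ≤ k - m})
      = μ.real {ω | X ω = m} * μ.real {ω | Y ω ≤ k - m} := by
    simp only [measureReal_def, ← ENNReal.toReal_mul]
    exact congrArg _ (hXY.measure_inter_preimage_eq_mul _ _ (measurableSet_singleton m)
      measurableSet_Iic)
  rw [setIntegral_congr_fun (hmeas m hm) (hconst m hm), setIntegral_const, smul_eq_mul, mul_comm,
    hprod]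

end ProbabilityTheory

theorem expected_cumulative_allocation_katz_general
    {Ω : Type*} [MeasurableSpace Ω] (μ : Measure Ω) [IsProbabilityMeasure μ]
    (n : ℕ) (X : Fin (n + 1) → Ω → ℕ) (hX : ∀ i, Measurable (X i))
    (S Sm : Ω → ℕ)
    (hS : ∀ ω, S ω = ∑ i, X i ω)
    (hSm : ∀ ω, Sm ω = ∑ i : Fin n, X i.succ ω)
    (a b : ℝ)
    (hkatz : ∀ k : ℕ, (μ {ω | X 0 ω = k + 1}).toReal
      = (a + b / (k + 1)) * (μ {ω | X 0 ω = k}).toReal)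
    (hindep : IndepFun (X 0) Sm μ) :
    ∀ k : ℕ, 1 ≤ k →
      ∫ ω in {ω | S ω ≤ k}, (X 0 ω : ℝ) ∂μ
        = (a + b) * ∑ j ∈ Finset.range k, a ^ j * (μ {ω | S ω ≤ k - 1 - j}).toReal := by
  intro k _
  have hSm_meas : Measurable Sm := by
    rw [funext hSm]
    fun_prop
  obtain rfl : S = fun ω => X 0 ω + Sm ω := funext fun ω => by rw [hS, hSm, Fin.sum_univ_succ]
  have hT := hindep.setIntegral_setOf_add_le (hX 0) hSm_meas Nat.cast
  beta_reduce
  have hH (k : ℕ) : μ.real {ω | X 0 ω + Sm ω ≤ k}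
      = ∑ m ∈ range (k + 1), μ.real {ω | X 0 ω = m} * μ.real {ω | Sm ω ≤ k - m} := by
    simpa using hindep.setIntegral_setOf_add_le (hX 0) hSm_meas 1 k
  refine eq_mul_sum_pow_mul_of_recurrence
    (T := fun k => ∫ ω in {ω | X 0 ω + Sm ω ≤ k}, (X 0 ω : ℝ) ∂μ)
    (H := fun k => μ.real {ω | X 0 ω + Sm ω ≤ k}) ((hT 0).trans (by simp)) (fun k => ?_) k
  rw [hT, hT, hH]
  exact sum_range_succ_mul_convolution_of_katz (f := fun m => μ.real {ω | X 0 ω = m}) hkatz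
    (fun t => μ.real {ω | Sm ω ≤ t}) k

/-- If `X₁` follows a Katz distribution with parameters `|a| < 1`, `b > 0`
and is independent of `S₋₁`, then for every `k ≥ 1`,
`E[X₁ · 1_{S≤k}] = (a+b) ∑_{j=0}^{k-1} a^j P(S ≤ k-1-j)`. -/
theorem expected_cumulative_allocation_katz
    {Ω : Type*} [MeasurableSpace Ω] (μ : Measure Ω) [IsProbabilityMeasure μ]
    (n : ℕ) (X : Fin (n + 1) → Ω → ℕ) (hX : ∀ i, Measurable (X i))
    (S Sm : Ω → ℕ)
    (hS : ∀ ω, S ω = ∑ i, X i ω)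
    (hSm : ∀ ω, Sm ω = ∑ i : Fin n, X i.succ ω)
    (a b : ℝ) (ha : |a| < 1) (hb : 0 < b)
    (hkatz : ∀ k : ℕ, (μ {ω | X 0 ω = k + 1}).toReal
      = (a + b / (k + 1)) * (μ {ω | X 0 ω = k}).toReal)
    (hindep : IndepFun (X 0) Sm μ) :
    ∀ k : ℕ, 1 ≤ k →
      ∫ ω in {ω | S ω ≤ k}, (X 0 ω : ℝ) ∂μ
        = (a + b) * ∑ j ∈ Finset.range k, a ^ j * (μ {ω | S ω ≤ k - 1 - j}).toReal :=
  expected_cumulative_allocation_katz_general μ n X hX S Sm hS hSm a b hkatz hindep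
end

section
/- Let X₁,…,Xₙ be ℕ-valued random variables on a probability space with S = X₁+⋯+Xₙ and S₋₁ = X₂+⋯+Xₙ. Suppose X₁ follows a Katz distribution with parameters a and b, where |a| < 1 and b > 0, and that X₁ is independent of S₋₁. Then for every integer k ≥ 1, the expected cumulative allocation satisfies E[X₁ · 1_{\{S≤k\}}] = (a+b) · ∑_{j=0}^{k−1} (1 − a^{j+1})/(1 − a) · P(S = k−1−j). -/
/-!
Write `S = Y + Z` with `Y = X₁` and `Z = S₋₁` independent, `p` for the law of `Y`, `q` for the law
of `Z` and `G j = E[Y · 1_{S = j}]`. Independence turns `P(S = j)` and `G j` into the convolutions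
`∑_{m + r = j} p m q r` and `∑_{m + r = j} m p m q r`, and the Katz recursion
`(m + 1) p (m + 1) = (a m + a + b) p m` then gives `G (j + 1) = a G j + (a + b) P(S = j)`.
Solving this first-order recursion with `G 0 = 0` and summing over `j ≤ k` produces the geometric
weights `1 + a + ⋯ + a^j = (1 - a^{j+1}) / (1 - a)`.
-/

open MeasureTheory ProbabilityTheory Finset Function

section Recursion

variable {R : Type*} [CommRing R]

lemma sum_antidiagonal_succ_mul_eq_of_katz {a c : R} {p : ℕ → R}
    (hp : ∀ m : ℕ, ((m : R) + 1) * p (m + 1) = (a * m + c) * p m) (q : ℕ → R) (j : ℕ) :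
    ∑ x ∈ antidiagonal (j + 1), (x.1 : R) * (p x.1 * q x.2)
      = a * ∑ x ∈ antidiagonal j, (x.1 : R) * (p x.1 * q x.2)
        + c * ∑ x ∈ antidiagonal j, p x.1 * q x.2 := by
  rw [Nat.sum_antidiagonal_succ, mul_sum, mul_sum, ← sum_add_distrib]
  simp only [Nat.cast_zero, zero_mul, zero_add, Nat.cast_add, Nat.cast_one]
  refine sum_congr rfl fun x _ => ?_
  linear_combination q x.2 * hp x.1

lemma sum_range_succ_eq_of_linear_recurrence {a c : R} {F G : ℕ → R} (h0 : G 0 = 0)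
    (hrec : ∀ j, G (j + 1) = a * G j + c * F j) (k : ℕ) :
    ∑ j ∈ range (k + 1), G j = c * ∑ x ∈ antidiagonal k, (∑ i ∈ range x.1, a ^ i) * F x.2 := by
  induction k with
  | zero => simp [h0]
  | succ k ih =>
    have hF : ∑ x ∈ antidiagonal k, F x.2 = ∑ j ∈ range (k + 1), F j := by
      rw [← Nat.sum_antidiagonal_swap]
      exact Nat.sum_antidiagonal_eq_sum_range_succ (fun i _ => F i) k
    rw [sum_range_succ', h0, add_zero]
    simp only [hrec]
    rw [sum_add_distrib, ← mul_sum, ← mul_sum, ih, Nat.sum_antidiagonal_succ, ← hF]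
    simp only [geom_sum_succ, sum_range_zero, zero_mul, zero_add, add_mul, one_mul, mul_assoc,
      sum_add_distrib, ← mul_sum]
    ring

end Recursion

section Independent

variable {Ω : Type*} {Y Z : Ω → ℕ}

lemma setOf_add_eq_eq_biUnion_antidiagonal (j : ℕ) :
    {ω | Y ω + Z ω = j} = ⋃ x ∈ antidiagonal j, {ω | Y ω = x.1} ∩ {ω | Z ω = x.2} := by
  ext ω
  simp [and_comm]

variable [MeasurableSpace Ω] {μ : Measure Ω}

lemma setIntegral_setOf_le_eq_sum {S : Ω → ℕ} (hS : Measurable S) {f : Ω → ℝ}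
    (hf : ∀ j, IntegrableOn f {ω | S ω = j} μ) (k : ℕ) :
    ∫ ω in {ω | S ω ≤ k}, f ω ∂μ = ∑ j ∈ range (k + 1), ∫ ω in {ω | S ω = j}, f ω ∂μ := by
  have hle : {ω | S ω ≤ k} = ⋃ j ∈ range (k + 1), {ω | S ω = j} := by
    ext ω
    simp
  rw [hle, integral_biUnion_finset (s := fun j => {ω | S ω = j}) _
    (fun j _ => hS (measurableSet_singleton j))
    ((Set.pairwiseDisjoint_fiber S _).subset (Set.subset_univ _)) fun j _ => hf j]

variable [IsFiniteMeasure μ]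

lemma integrableOn_comp_inter_fiber (hY : Measurable Y) (hZ : Measurable Z) (f : ℕ → ℝ)
    (x : ℕ × ℕ) : IntegrableOn (fun ω => f (Y ω)) ({ω | Y ω = x.1} ∩ {ω | Z ω = x.2}) μ :=
  (integrableOn_const (C := f x.1)).congr_fun (fun ω hω => congrArg f hω.1.symm)
    ((hY (measurableSet_singleton _)).inter (hZ (measurableSet_singleton _)))

lemma integrableOn_comp_setOf_add_eq (hY : Measurable Y) (hZ : Measurable Z) (f : ℕ → ℝ)
    (j : ℕ) : IntegrableOn (fun ω => f (Y ω)) {ω | Y ω + Z ω = j} μ := by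
  rw [setOf_add_eq_eq_biUnion_antidiagonal]
  exact integrableOn_finset_iUnion.2 fun x _ => integrableOn_comp_inter_fiber hY hZ f x

lemma setIntegral_comp_setOf_add_eq_of_indepFun (hY : Measurable Y) (hZ : Measurable Z)
    (hYZ : IndepFun Y Z μ) (f : ℕ → ℝ) (j : ℕ) :
    ∫ ω in {ω | Y ω + Z ω = j}, f (Y ω) ∂μ
      = ∑ x ∈ antidiagonal j, f x.1 * (μ.real {ω | Y ω = x.1} * μ.real {ω | Z ω = x.2}) := by
  have hmeas : ∀ x : ℕ × ℕ, MeasurableSet ({ω | Y ω = x.1} ∩ {ω | Z ω = x.2}) := fun x =>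
    (hY (measurableSet_singleton _)).inter (hZ (measurableSet_singleton _))
  have hdisj : Set.Pairwise (antidiagonal j : Set (ℕ × ℕ))
      (Disjoint on fun x => {ω | Y ω = x.1} ∩ {ω | Z ω = x.2}) := by
    rintro x - y - hxy
    refine Set.disjoint_left.2 fun ω hx hy => hxy ?_
    exact Prod.ext (hx.1.symm.trans hy.1) (hx.2.symm.trans hy.2)
  rw [setOf_add_eq_eq_biUnion_antidiagonal, integral_biUnion_finset _ (fun x _ => hmeas x) hdisj]
  · refine sum_congr rfl fun x _ => ?_
    rw [setIntegral_congr_fun (hmeas x) (g := fun _ => f x.1) fun ω hω => congrArg f hω.1,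
      setIntegral_const, smul_eq_mul, mul_comm]
    congr 1
    simp only [measureReal_def, ← ENNReal.toReal_mul]
    exact congrArg ENNReal.toReal (hYZ.measure_inter_preimage_eq_mul _ _
      (measurableSet_singleton x.1) (measurableSet_singleton x.2))
  · exact fun x _ => integrableOn_comp_inter_fiber hY hZ f x

lemma measureReal_setOf_add_eq_of_indepFun (hY : Measurable Y) (hZ : Measurable Z)
    (hYZ : IndepFun Y Z μ) (j : ℕ) :
    μ.real {ω | Y ω + Z ω = j}
      = ∑ x ∈ antidiagonal j, μ.real {ω | Y ω = x.1} * μ.real {ω | Z ω = x.2} := by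
  simpa using setIntegral_comp_setOf_add_eq_of_indepFun hY hZ hYZ (fun _ => 1) j

lemma setIntegral_setOf_add_le_of_katz (hY : Measurable Y) (hZ : Measurable Z)
    (hYZ : IndepFun Y Z μ) {a c : ℝ}
    (hkatz : ∀ m : ℕ, ((m : ℝ) + 1) * μ.real {ω | Y ω = m + 1} = (a * m + c) * μ.real {ω | Y ω = m})
    (k : ℕ) :
    ∫ ω in {ω | Y ω + Z ω ≤ k}, (Y ω : ℝ) ∂μ
      = c * ∑ x ∈ antidiagonal k, (∑ i ∈ range x.1, a ^ i) * μ.real {ω | Y ω + Z ω = x.2} := by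
  rw [setIntegral_setOf_le_eq_sum (S := fun ω => Y ω + Z ω) (hY.add hZ)
    (integrableOn_comp_setOf_add_eq hY hZ Nat.cast) k,
    sum_congr rfl fun j _ => setIntegral_comp_setOf_add_eq_of_indepFun hY hZ hYZ Nat.cast j]
  simp only [measureReal_setOf_add_eq_of_indepFun hY hZ hYZ]
  set p : ℕ → ℝ := fun m => μ.real {ω | Y ω = m}
  set q : ℕ → ℝ := fun r => μ.real {ω | Z ω = r}
  exact sum_range_succ_eq_of_linear_recurrence
    (G := fun j => ∑ x ∈ antidiagonal j, (x.1 : ℝ) * (p x.1 * q x.2))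
    (F := fun j => ∑ x ∈ antidiagonal j, p x.1 * q x.2) (by simp)
    (sum_antidiagonal_succ_mul_eq_of_katz hkatz q) k

end Independent

theorem expected_cumulative_allocation_katz'_general
    {Ω : Type*} [MeasurableSpace Ω] (μ : Measure Ω) [IsProbabilityMeasure μ]
    (n : ℕ) (X : Fin (n + 1) → Ω → ℕ) (hX : ∀ i, Measurable (X i))
    (S Sm : Ω → ℕ)
    (hS : ∀ ω, S ω = ∑ i, X i ω)
    (hSm : ∀ ω, Sm ω = ∑ i : Fin n, X i.succ ω)
    (a b : ℝ) (ha : |a| < 1)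
    (hkatz : ∀ k : ℕ, (μ {ω | X 0 ω = k + 1}).toReal
      = (a + b / (k + 1)) * (μ {ω | X 0 ω = k}).toReal)
    (hindep : IndepFun (X 0) Sm μ) :
    ∀ k : ℕ, 1 ≤ k →
      ∫ ω in {ω | S ω ≤ k}, (X 0 ω : ℝ) ∂μ
        = (a + b) * ∑ j ∈ Finset.range k, (1 - a ^ (j + 1)) / (1 - a) * (μ {ω | S ω = k - 1 - j}).toReal := by
  intro k hk
  obtain ⟨k, rfl⟩ := Nat.exists_eq_add_of_le' hk
  have hSm_meas : Measurable Sm := by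
    rw [show Sm = fun ω => ∑ i : Fin n, X i.succ ω from funext hSm]
    exact Finset.measurable_sum _ fun i _ => hX i.succ
  obtain rfl : S = fun ω => X 0 ω + Sm ω := funext fun ω => by rw [hS, hSm, Fin.sum_univ_succ]
  have hrec (m : ℕ) : ((m : ℝ) + 1) * μ.real {ω | X 0 ω = m + 1}
      = (a * m + (a + b)) * μ.real {ω | X 0 ω = m} := by
    rw [measureReal_def, measureReal_def, hkatz m]
    field_simp
    ring
  have hgeom (m : ℕ) : ∑ i ∈ range m, a ^ i = (1 - a ^ m) / (1 - a) := by
    have ha1 : a ≠ 1 := by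
      rintro rfl
      simp at ha
    rw [geom_sum_eq ha1, ← neg_div_neg_eq, neg_sub, neg_sub]
  simp only [← measureReal_def, setIntegral_setOf_add_le_of_katz (hX 0) hSm_meas hindep hrec,
    Nat.sum_antidiagonal_succ, Nat.sum_antidiagonal_eq_sum_range_succ_mk, hgeom, pow_zero,
    sub_self, zero_div, zero_mul, zero_add, Nat.add_sub_cancel, Nat.succ_eq_add_one]

/-- If `X₁` follows a Katz distribution with parameters `|a| < 1`, `b > 0`
and is independent of `S₋₁`, then for every `k ≥ 1`,
`E[X₁ · 1_{S≤k}] = (a+b) ∑_{j=0}^{k-1} (1 - a^{j+1})/(1 - a) · P(S = k-1-j)`. -/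
theorem expected_cumulative_allocation_katz'
    {Ω : Type*} [MeasurableSpace Ω] (μ : Measure Ω) [IsProbabilityMeasure μ]
    (n : ℕ) (X : Fin (n + 1) → Ω → ℕ) (hX : ∀ i, Measurable (X i))
    (S Sm : Ω → ℕ)
    (hS : ∀ ω, S ω = ∑ i, X i ω)
    (hSm : ∀ ω, Sm ω = ∑ i : Fin n, X i.succ ω)
    (a b : ℝ) (ha : |a| < 1) (hb : 0 < b)
    (hkatz : ∀ k : ℕ, (μ {ω | X 0 ω = k + 1}).toReal
      = (a + b / (k + 1)) * (μ {ω | X 0 ω = k}).toReal)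
    (hindep : IndepFun (X 0) Sm μ) :
    ∀ k : ℕ, 1 ≤ k →
      ∫ ω in {ω | S ω ≤ k}, (X 0 ω : ℝ) ∂μ
        = (a + b) * ∑ j ∈ Finset.range k, (1 - a ^ (j + 1)) / (1 - a) * (μ {ω | S ω = k - 1 - j}).toReal :=
  expected_cumulative_allocation_katz'_general μ n X hX S Sm hS hSm a b ha hkatz hindep
end

section
/- Let X₁,…,Xₙ be ℕ-valued random variables on a probability space with S = X₁+⋯+Xₙ and S₋₁ = X₂+⋯+Xₙ. Suppose X₁ follows a Katz distribution with parameters a and b, where |a| < 1 and b > 0, and that X₁ is independent of S₋₁. Then for every integer k ≥ 1, (a − 1) · E[X₁ · 1_{\{S≤k\}}] = a · E[X₁ · 1_{\{S=k\}}] − (a+b) · P(S ≤ k−1). -/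
/-!
Write `S = X₁ + S₋₁` and `p j = P(X₁ = j)`. By independence,
`E[X₁ · 1_{S ≤ k}] = ∑_j j p j P(S₋₁ ≤ k - j)`, and the Katz recursion
`(j + 1) p (j + 1) = (a j + a + b) p j` shifts this sum by one index, giving
`E[X₁ · 1_{S ≤ k}] = a E[X₁ · 1_{S ≤ k-1}] + (a + b) P(S ≤ k - 1)`.
Eliminating `E[X₁ · 1_{S ≤ k-1}] = E[X₁ · 1_{S ≤ k}] - E[X₁ · 1_{S = k}]` gives the claim.
-/

open MeasureTheory ProbabilityTheory Finset

/-- A finite-range form of the Stein identity `E[N ψ(N)] = E[(a N + a + b) ψ(N + 1)]`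
of a Katz variable `N`. -/
lemma Finset.sum_range_natCast_mul_of_katz {p : ℕ → ℝ} {a b : ℝ}
    (hkatz : ∀ j : ℕ, ((j : ℝ) + 1) * p (j + 1) = (a * (j + 1) + b) * p j)
    (ψ : ℕ → ℝ) (m : ℕ) :
    ∑ j ∈ range (m + 1 + 1), (j : ℝ) * p j * ψ j
      = ∑ j ∈ range (m + 1), (a * j + (a + b)) * p j * ψ (j + 1) := by
  rw [sum_range_succ']
  simp only [Nat.cast_zero, zero_mul, add_zero, Nat.cast_succ]
  refine sum_congr rfl fun j _ => ?_
  rw [hkatz j]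
  ring

namespace ProbabilityTheory

lemma setOf_add_le_eq_biUnion {Ω : Type*} (X T : Ω → ℕ) (k : ℕ) :
    {ω | X ω + T ω ≤ k} = ⋃ j ∈ range (k + 1), {ω | X ω = j} ∩ {ω | T ω ≤ k - j} := by
  ext ω
  simp only [Set.mem_ofPred_eq, Set.mem_iUnion, Set.mem_inter_iff, mem_range, exists_prop]
  constructor
  · intro h
    exact ⟨X ω, by omega, rfl, by omega⟩
  · rintro ⟨j, hj, rfl, h⟩
    omega

variable {Ω : Type*} [MeasurableSpace Ω] {μ : Measure Ω}

lemma IndepFun.setIntegral_add_le_eq_sum [IsFiniteMeasure μ] {X T : Ω → ℕ}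
    (hX : Measurable X) (hT : Measurable T) (hXT : IndepFun X T μ) (φ : ℕ → ℝ) (k : ℕ) :
    ∫ ω in {ω | X ω + T ω ≤ k}, φ (X ω) ∂μ
      = ∑ j ∈ range (k + 1), φ j * μ.real {ω | X ω = j} * μ.real {ω | T ω ≤ k - j} := by
  set A : ℕ → Set Ω := fun j => {ω | X ω = j} ∩ {ω | T ω ≤ k - j}
  have hA : ∀ j, MeasurableSet (A j) := fun j =>
    (hX (measurableSet_singleton j)).inter (hT measurableSet_Iic)
  have hφ : ∀ j, Set.EqOn (fun ω => φ (X ω)) (fun _ => φ j) (A j) := by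
    rintro j ω ⟨hω, -⟩
    exact congrArg φ hω
  have hdisj : Set.PairwiseDisjoint (↑(range (k + 1))) A := by
    intro i _ j _ hij
    exact Set.disjoint_left.2 fun ω hi hj => hij (hi.1.symm.trans hj.1)
  rw [setOf_add_le_eq_biUnion, integral_biUnion_finset _ (fun j _ => hA j) hdisj
    fun j _ => (integrableOn_const (measure_ne_top μ _)).congr_fun (hφ j).symm (hA j)]
  refine sum_congr rfl fun j _ => ?_
  have hindep : μ.real (A j) = μ.real {ω | X ω = j} * μ.real {ω | T ω ≤ k - j} := by
    simp only [measureReal_def, ← ENNReal.toReal_mul]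
    exact congrArg _ (hXT.measure_inter_preimage_eq_mul _ _ (measurableSet_singleton j)
      measurableSet_Iic)
  rw [setIntegral_congr_fun (hA j) (hφ j), setIntegral_const, smul_eq_mul, hindep]
  ring

lemma IndepFun.measureReal_add_le_eq_sum [IsFiniteMeasure μ] {X T : Ω → ℕ}
    (hX : Measurable X) (hT : Measurable T) (hXT : IndepFun X T μ) (k : ℕ) :
    μ.real {ω | X ω + T ω ≤ k}
      = ∑ j ∈ range (k + 1), μ.real {ω | X ω = j} * μ.real {ω | T ω ≤ k - j} := by
  simpa using hXT.setIntegral_add_le_eq_sum hX hT (fun _ => 1) k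

lemma IndepFun.setIntegral_add_le_succ_of_katz [IsFiniteMeasure μ] {X T : Ω → ℕ}
    (hX : Measurable X) (hT : Measurable T) (hXT : IndepFun X T μ) {a b : ℝ}
    (hkatz : ∀ j : ℕ, ((j : ℝ) + 1) * μ.real {ω | X ω = j + 1}
      = (a * (j + 1) + b) * μ.real {ω | X ω = j}) (m : ℕ) :
    ∫ ω in {ω | X ω + T ω ≤ m + 1}, (X ω : ℝ) ∂μ
      = a * ∫ ω in {ω | X ω + T ω ≤ m}, (X ω : ℝ) ∂μ
        + (a + b) * μ.real {ω | X ω + T ω ≤ m} := by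
  rw [hXT.setIntegral_add_le_eq_sum hX hT, hXT.setIntegral_add_le_eq_sum hX hT,
    hXT.measureReal_add_le_eq_sum hX hT,
    sum_range_natCast_mul_of_katz (p := fun j => μ.real {ω | X ω = j}) hkatz,
    mul_sum, mul_sum, ← sum_add_distrib]
  refine sum_congr rfl fun j _ => ?_
  rw [Nat.add_sub_add_right]
  ring

lemma integrableOn_natCast_setOf_le [IsFiniteMeasure μ] {X S : Ω → ℕ} (hX : Measurable X)
    (hS : Measurable S) (hXS : ∀ ω, X ω ≤ S ω) (k : ℕ) :
    IntegrableOn (fun ω => (X ω : ℝ)) {ω | S ω ≤ k} μ := by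
  refine IntegrableOn.of_bound (measure_lt_top μ _) (by fun_prop) k ?_
  refine ae_restrict_of_forall_mem (hS measurableSet_Iic) fun ω hω => ?_
  simpa using (hXS ω).trans hω

lemma setIntegral_setOf_le_succ {S : Ω → ℕ} (hS : Measurable S) {f : Ω → ℝ} {k : ℕ}
    (hf : IntegrableOn f {ω | S ω ≤ k + 1} μ) :
    ∫ ω in {ω | S ω ≤ k + 1}, f ω ∂μ
      = ∫ ω in {ω | S ω ≤ k}, f ω ∂μ + ∫ ω in {ω | S ω = k + 1}, f ω ∂μ := by
  have hunion : {ω | S ω ≤ k + 1} = {ω | S ω ≤ k} ∪ {ω | S ω = k + 1} := by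
    ext ω
    simp only [Set.mem_ofPred_eq, Set.mem_union]
    omega
  have hdisj : Disjoint {ω | S ω ≤ k} {ω | S ω = k + 1} :=
    Set.disjoint_left.2 fun ω h₁ h₂ => by simp_all
  rw [hunion] at hf ⊢
  exact setIntegral_union hdisj (hS (measurableSet_singleton _))
    (hf.mono_set Set.subset_union_left) (hf.mono_set Set.subset_union_right)

end ProbabilityTheory

theorem allocation_vs_cumulative_allocation_katz_general
    {Ω : Type*} [MeasurableSpace Ω] (μ : Measure Ω) [IsProbabilityMeasure μ]
    (n : ℕ) (X : Fin (n + 1) → Ω → ℕ) (hX : ∀ i, Measurable (X i))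
    (S Sm : Ω → ℕ)
    (hS : ∀ ω, S ω = ∑ i, X i ω)
    (hSm : ∀ ω, Sm ω = ∑ i : Fin n, X i.succ ω)
    (a b : ℝ)
    (hkatz : ∀ k : ℕ, (μ {ω | X 0 ω = k + 1}).toReal
      = (a + b / (k + 1)) * (μ {ω | X 0 ω = k}).toReal)
    (hindep : IndepFun (X 0) Sm μ) :
    ∀ k : ℕ, 1 ≤ k →
      (a - 1) * ∫ ω in {ω | S ω ≤ k}, (X 0 ω : ℝ) ∂μ
        = a * (∫ ω in {ω | S ω = k}, (X 0 ω : ℝ) ∂μ)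
          - (a + b) * (μ {ω | S ω ≤ k - 1}).toReal := by
  intro k hk
  obtain ⟨m, rfl⟩ : ∃ m, k = m + 1 := ⟨k - 1, by omega⟩
  have hSm_meas : Measurable Sm := by
    rw [funext hSm]
    exact Finset.measurable_sum _ fun i _ => hX i.succ
  have hS_eq : S = fun ω => X 0 ω + Sm ω := funext fun ω => by rw [hS, hSm, Fin.sum_univ_succ]
  have hS_meas : Measurable S := hS_eq ▸ (hX 0).add hSm_meas
  have hsplit := setIntegral_setOf_le_succ hS_meas
    (integrableOn_natCast_setOf_le (μ := μ) (hX 0) hS_meas (fun ω => by simp [hS_eq]) (m + 1))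
  have hkatz_mul : ∀ j : ℕ, ((j : ℝ) + 1) * μ.real {ω | X 0 ω = j + 1}
      = (a * (j + 1) + b) * μ.real {ω | X 0 ω = j} := fun j => by
    simp only [measureReal_def]
    rw [hkatz j]
    field_simp
  have hshift : ∫ ω in {ω | S ω ≤ m + 1}, (X 0 ω : ℝ) ∂μ
      = a * ∫ ω in {ω | S ω ≤ m}, (X 0 ω : ℝ) ∂μ + (a + b) * μ.real {ω | S ω ≤ m} := by
    simpa only [hS_eq] using
      hindep.setIntegral_add_le_succ_of_katz (hX 0) hSm_meas hkatz_mul m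
  rw [Nat.add_sub_cancel, ← measureReal_def]
  linear_combination a * hsplit - hshift

/-- If `X₁` follows a Katz distribution with parameters `|a| < 1`, `b > 0`
and is independent of `S₋₁`, then for every `k ≥ 1`,
`(a - 1) E[X₁ · 1_{S≤k}] = a E[X₁ · 1_{S=k}] - (a+b) P(S ≤ k-1)`. -/
theorem allocation_vs_cumulative_allocation_katz
    {Ω : Type*} [MeasurableSpace Ω] (μ : Measure Ω) [IsProbabilityMeasure μ]
    (n : ℕ) (X : Fin (n + 1) → Ω → ℕ) (hX : ∀ i, Measurable (X i))
    (S Sm : Ω → ℕ)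
    (hS : ∀ ω, S ω = ∑ i, X i ω)
    (hSm : ∀ ω, Sm ω = ∑ i : Fin n, X i.succ ω)
    (a b : ℝ) (ha : |a| < 1) (hb : 0 < b)
    (hkatz : ∀ k : ℕ, (μ {ω | X 0 ω = k + 1}).toReal
      = (a + b / (k + 1)) * (μ {ω | X 0 ω = k}).toReal)
    (hindep : IndepFun (X 0) Sm μ) :
    ∀ k : ℕ, 1 ≤ k →
      (a - 1) * ∫ ω in {ω | S ω ≤ k}, (X 0 ω : ℝ) ∂μ
        = a * (∫ ω in {ω | S ω = k}, (X 0 ω : ℝ) ∂μ)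
          - (a + b) * (μ {ω | S ω ≤ k - 1}).toReal :=
  allocation_vs_cumulative_allocation_katz_general μ n X hX S Sm hS hSm a b hkatz hindep
end

section
/- Let X₁,…,Xₙ be ℕ-valued random variables on a probability space with S = X₁+⋯+Xₙ and S₋₁ = X₂+⋯+Xₙ. Suppose X₁ has a binomial distribution with parameters m ∈ ℕ⁺ and q ∈ (0, 1/2), and that X₁ is independent of S₋₁. Then for every integer k ≥ 1, E[X₁ · 1_{\{S=k\}}] = m · ∑_{j=1}^{k} (−1)^{j+1} · (q/(1−q))^j · P(S = k−j). -/
/-!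
Work with generating functions in `ℝ⟦X⟧`. By independence, the distribution of `S = X₁ + S₋₁`
is generated by `G · P`, where `G = (1 - q + qX)^m` generates `X₁` and `P` generates `S₋₁`, and
`E[X₁; S = k]` is the `k`-th coefficient of `(X G') · P`. Now `X G' = m q X (1 - q + qX)^(m-1)
= m A G` with `A = qX / (1 - q + qX) = ∑_{j ≥ 1} (-1)^(j+1) (q/(1-q))^j X^j`, so
`E[X₁; S = k]` is the `k`-th coefficient of `m A (G P)`.
-/

open MeasureTheory ProbabilityTheory

namespace PowerSeries

variable {K : Type*} [Field K]

/-- The probability generating function of a Bernoulli(`q`) variable; its `m`-th power generates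
Binomial(`m`, `q`). -/
noncomputable def bernoulliPGF (q : K) : K⟦X⟧ := C (1 - q) + C q * X

theorem coeff_bernoulliPGF_pow (q : K) (m x : ℕ) :
    coeff x (bernoulliPGF q ^ m) = m.choose x * q ^ x * (1 - q) ^ (m - x) := by
  rw [bernoulliPGF, add_comm, add_pow, map_sum]
  have hterm : ∀ i, (C q * X) ^ i * C (1 - q) ^ (m - i) * (m.choose i : K⟦X⟧)
      = C (m.choose i * q ^ i * (1 - q) ^ (m - i)) * X ^ i := by
    intro i
    simp only [mul_pow, map_mul, map_pow, map_natCast]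
    ring
  simp_rw [hterm, coeff_C_mul_X_pow]
  rw [Finset.sum_ite_eq]
  split_ifs with h
  · rfl
  · rw [Nat.choose_eq_zero_of_lt (by simpa using h)]; simp

theorem X_mul_derivative_mk {R : Type*} [CommSemiring R] (f : ℕ → R) :
    X * d⁄dX R (mk f) = mk fun n => n * f n := by
  ext (_ | n)
  · simp
  · rw [coeff_succ_X_mul, coeff_derivative, coeff_mk, coeff_mk]; push_cast; ring

theorem one_sub_geom_mul_bernoulliPGF {q : K} (hq : q ≠ 1) :
    (1 - mk fun j => (-(q / (1 - q))) ^ j) * bernoulliPGF q = C q * X := by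
  set r := q / (1 - q)
  have hgeom : (mk fun j => (-r) ^ j) * (1 + C r * X) = 1 := by
    have h := congrArg (rescale (-r)) (mk_one_mul_one_sub_eq_one (S := K))
    rwa [map_mul, map_sub, map_one, rescale_X, map_neg, neg_mul, sub_neg_eq_add,
      show rescale (-r) (mk 1) = mk fun j => (-r) ^ j by ext; simp [coeff_rescale]] at h
  have hB : bernoulliPGF q = C (1 - q) * (1 + C r * X) := by
    rw [bernoulliPGF, mul_add, mul_one, ← mul_assoc, ← map_mul,
      mul_div_cancel₀ _ (sub_ne_zero.2 hq.symm)]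
  calc (1 - mk fun j => (-r) ^ j) * bernoulliPGF q
      = bernoulliPGF q - C (1 - q) * ((mk fun j => (-r) ^ j) * (1 + C r * X)) := by
        rw [hB]; ring
    _ = C q * X := by rw [hgeom, bernoulliPGF]; ring

theorem X_mul_derivative_bernoulliPGF_pow {q : K} (hq : q ≠ 1) (m : ℕ) :
    X * d⁄dX K (bernoulliPGF q ^ m)
      = (m : K⟦X⟧) * (1 - mk fun j => (-(q / (1 - q))) ^ j) * bernoulliPGF q ^ m := by
  rcases m with _ | m
  · simp
  have hderiv : d⁄dX K (bernoulliPGF q) = C q := by simp [bernoulliPGF]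
  rw [derivative_pow, hderiv, add_tsub_cancel_right]
  linear_combination (-((m + 1 : ℕ) : K⟦X⟧) * bernoulliPGF q ^ m) * one_sub_geom_mul_bernoulliPGF hq

theorem coeff_one_sub_geom_mul (c : K) (f : K⟦X⟧) (k : ℕ) :
    coeff k ((1 - mk fun j => (-c) ^ j) * f)
      = ∑ j ∈ Finset.Icc 1 k, (-1) ^ (j + 1) * c ^ j * coeff (k - j) f := by
  have hcoeff : ∀ j, coeff j (1 - mk fun j => (-c) ^ j)
      = if j = 0 then 0 else (-1) ^ (j + 1) * c ^ j := by
    rintro (_ | j)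
    · simp
    · rw [map_sub, coeff_one, if_neg j.succ_ne_zero, if_neg j.succ_ne_zero, coeff_mk, neg_pow c]
      ring
  rw [coeff_mul, Finset.Nat.sum_antidiagonal_eq_sum_range_succ_mk, Finset.range_eq_Ico,
    Finset.sum_eq_sum_Ico_succ_bot (by omega : 0 < k + 1), zero_add,
    Finset.Ico_add_one_right_eq_Icc]
  simp only [hcoeff, if_pos, zero_mul, zero_add]
  refine Finset.sum_congr rfl fun j hj => ?_
  rw [if_neg (by rw [Finset.mem_Icc] at hj; omega)]

end PowerSeries

namespace ProbabilityTheory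

open Finset PowerSeries

variable {Ω : Type*} [MeasurableSpace Ω] {μ : Measure Ω} [IsFiniteMeasure μ] {X Y : Ω → ℕ}

theorem setIntegral_add_eq_sum_antidiagonal (hX : Measurable X) (hY : Measurable Y) (g : ℕ → ℝ)
    (t : ℕ) :
    ∫ ω in {ω | X ω + Y ω = t}, g (X ω) ∂μ
      = ∑ p ∈ antidiagonal t, g p.1 * μ.real (X ⁻¹' {p.1} ∩ Y ⁻¹' {p.2}) := by
  set E : ℕ × ℕ → Set Ω := fun p => X ⁻¹' {p.1} ∩ Y ⁻¹' {p.2}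
  have hE : ∀ p, MeasurableSet (E p) := fun p =>
    (hX (measurableSet_singleton _)).inter (hY (measurableSet_singleton _))
  have hdisj : (antidiagonal t : Set (ℕ × ℕ)).Pairwise (Function.onFun Disjoint E) :=
    fun p _ p' _ hne => Set.disjoint_left.2 fun ω h h' =>
      hne (Prod.ext (h.1.symm.trans h'.1) (h.2.symm.trans h'.2))
  have hg : ∀ p, ∀ ω ∈ E p, g (X ω) = g p.1 := fun p ω hω => congrArg g hω.1
  have hunion : {ω | X ω + Y ω = t} = ⋃ p ∈ antidiagonal t, E p := by
    ext ω; simp [E]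
  rw [hunion, integral_biUnion_finset _ (fun p _ => hE p) hdisj
    fun p _ => (integrableOn_const (measure_ne_top μ _)).congr_fun
      (fun ω hω => (hg p ω hω).symm) (hE p)]
  refine sum_congr rfl fun p _ => ?_
  rw [setIntegral_congr_fun (hE p) (hg p), setIntegral_const, smul_eq_mul, mul_comm]

theorem IndepFun.setIntegral_add_eq_coeff_mul (hXY : IndepFun X Y μ)
    (hX : Measurable X) (hY : Measurable Y) (g : ℕ → ℝ) (t : ℕ) :
    ∫ ω in {ω | X ω + Y ω = t}, g (X ω) ∂μ
      = coeff t (mk (fun x => g x * μ.real {ω | X ω = x})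
          * mk fun y => μ.real {ω | Y ω = y}) := by
  rw [setIntegral_add_eq_sum_antidiagonal hX hY, coeff_mul]
  refine sum_congr rfl fun p _ => ?_
  rw [coeff_mk, coeff_mk, measureReal_def,
    hXY.measure_inter_preimage_eq_mul _ _ (measurableSet_singleton _) (measurableSet_singleton _),
    ENNReal.toReal_mul, mul_assoc]
  rfl

theorem IndepFun.measureReal_add_eq_coeff_mul (hXY : IndepFun X Y μ)
    (hX : Measurable X) (hY : Measurable Y) (t : ℕ) :
    μ.real {ω | X ω + Y ω = t}
      = coeff t (mk (fun x => μ.real {ω | X ω = x})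
          * mk fun y => μ.real {ω | Y ω = y}) := by
  simpa using hXY.setIntegral_add_eq_coeff_mul hX hY (fun _ => 1) t

end ProbabilityTheory

open PowerSeries in
theorem expected_allocation_binomial_general
    {Ω : Type*} [MeasurableSpace Ω] (μ : Measure Ω) [IsProbabilityMeasure μ]
    (n : ℕ) (X : Fin (n + 1) → Ω → ℕ) (hX : ∀ i, Measurable (X i))
    (S Sm : Ω → ℕ)
    (hS : ∀ ω, S ω = ∑ i, X i ω)
    (hSm : ∀ ω, Sm ω = ∑ i : Fin n, X i.succ ω)
    (m : ℕ) (q : ℝ) (hq : q ∈ Set.Ioo (0 : ℝ) (1 / 2))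
    (hbin : ∀ k : ℕ, (μ {ω | X 0 ω = k}).toReal
      = (m.choose k) * q ^ k * (1 - q) ^ (m - k))
    (hindep : IndepFun (X 0) Sm μ) :
    ∀ k : ℕ, 1 ≤ k →
      ∫ ω in {ω | S ω = k}, (X 0 ω : ℝ) ∂μ
        = m * ∑ j ∈ Finset.Icc 1 k,
            (-1 : ℝ) ^ (j + 1) * (q / (1 - q)) ^ j * (μ {ω | S ω = k - j}).toReal := by
  intro k _
  have hq1 : q ≠ 1 := (by linarith [hq.2] : q < 1).ne
  have hSm_meas : Measurable Sm := by
    rw [show Sm = fun ω => ∑ i : Fin n, X i.succ ω from funext hSm]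
    exact Finset.measurable_sum _ fun i _ => hX i.succ
  obtain rfl : S = fun ω => X 0 ω + Sm ω := funext fun ω => by rw [hS, hSm, Fin.sum_univ_succ]
  have hX0 : mk (fun x => μ.real {ω | X 0 ω = x}) = bernoulliPGF q ^ m :=
    ext fun x => by rw [coeff_mk, coeff_bernoulliPGF_pow, measureReal_def, hbin]
  set P := mk fun y => μ.real {ω | Sm ω = y}
  have hdistS : ∀ t, (μ {ω | X 0 ω + Sm ω = t}).toReal = coeff t (bernoulliPGF q ^ m * P) :=
    fun t => by rw [← measureReal_def, hindep.measureReal_add_eq_coeff_mul (hX 0) hSm_meas, hX0]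
  calc ∫ ω in {ω | X 0 ω + Sm ω = k}, (X 0 ω : ℝ) ∂μ
      = coeff k (mk (fun x => (x : ℝ) * μ.real {ω | X 0 ω = x}) * P) :=
        hindep.setIntegral_add_eq_coeff_mul (hX 0) hSm_meas _ k
    _ = coeff k (PowerSeries.X * d⁄dX ℝ (bernoulliPGF q ^ m) * P) := by
        rw [← hX0, X_mul_derivative_mk]
    _ = m * coeff k ((1 - mk fun j => (-(q / (1 - q))) ^ j) * (bernoulliPGF q ^ m * P)) := by
        rw [X_mul_derivative_bernoulliPGF_pow hq1, ← map_natCast C, mul_assoc, mul_assoc,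
          coeff_C_mul]
    _ = _ := by
        rw [coeff_one_sub_geom_mul]
        simp only [hdistS]

/-- If `X₁` has a binomial distribution with parameters `m ∈ ℕ⁺` and
`q ∈ (0, 1/2)`, and `X₁` is independent of `S₋₁`, then for every `k ≥ 1`,
`E[X₁ · 1_{S=k}] = m ∑_{j=1}^{k} (-1)^{j+1} (q/(1-q))^j P(S = k-j)`. -/
theorem expected_allocation_binomial
    {Ω : Type*} [MeasurableSpace Ω] (μ : Measure Ω) [IsProbabilityMeasure μ]
    (n : ℕ) (X : Fin (n + 1) → Ω → ℕ) (hX : ∀ i, Measurable (X i))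
    (S Sm : Ω → ℕ)
    (hS : ∀ ω, S ω = ∑ i, X i ω)
    (hSm : ∀ ω, Sm ω = ∑ i : Fin n, X i.succ ω)
    (m : ℕ) (hm : 0 < m) (q : ℝ) (hq : q ∈ Set.Ioo (0 : ℝ) (1 / 2))
    (hbin : ∀ k : ℕ, (μ {ω | X 0 ω = k}).toReal
      = (m.choose k) * q ^ k * (1 - q) ^ (m - k))
    (hindep : IndepFun (X 0) Sm μ) :
    ∀ k : ℕ, 1 ≤ k →
      ∫ ω in {ω | S ω = k}, (X 0 ω : ℝ) ∂μ
        = m * ∑ j ∈ Finset.Icc 1 k,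
            (-1 : ℝ) ^ (j + 1) * (q / (1 - q)) ^ j * (μ {ω | S ω = k - j}).toReal :=
  expected_allocation_binomial_general μ n X hX S Sm hS hSm m q hq hbin hindep
end

section
/- Let M₁ be a Poisson random variable with parameter λ₁ > 0, let B₁, B₂, … be i.i.d. ℕ-valued random variables with E[B₁] < ∞, all independent of M₁, and let X₁ = ∑_{j=1}^{M₁} B_j (with X₁ = 0 when M₁ = 0). Let X₂,…,Xₙ be ℕ-valued random variables such that X₁ is independent of S₋₁ = X₂+⋯+Xₙ, and set S = X₁+⋯+Xₙ. Then for every integer k ≥ 1, E[X₁ · 1_{\{S=k\}}] = λ₁ · ∑_{l=1}^{k} l · P(B₁ = l) · P(S = k−l). -/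
open MeasureTheory ProbabilityTheory Finset

/-- Sum over a triangle: `∑_{m≤N} ∑_{l≤m} H l (m-l) = ∑_{l≤N} ∑_{j<N+1-l} H l j`. -/
lemma aux_tri (N : ℕ) (H : ℕ → ℕ → ENNReal) :
    ∑ m ∈ range (N+1), ∑ l ∈ range (m+1), H l (m - l)
      = ∑ l ∈ range (N+1), ∑ j ∈ range (N+1-l), H l j := by
  induction N with
  | zero => simp
  | succ N ih =>
    rw [sum_range_succ, ih]
    rw [sum_range_succ (fun l => ∑ j ∈ range (N+2-l), H l j)]
    have h1 : ∀ l ∈ range (N+1), ∑ j ∈ range (N+2-l), H l j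
        = ∑ j ∈ range (N+1-l), H l j + H l (N+1-l) := by
      intro l hl
      rw [mem_range] at hl
      have : N + 2 - l = (N + 1 - l) + 1 := by omega
      rw [this, sum_range_succ]
    rw [sum_congr rfl h1, sum_add_distrib]
    have h2 : N + 2 - (N+1) = 1 := by omega
    rw [h2]
    have h3 : ∑ l ∈ range (N+1+1), H l (N+1-l)
        = ∑ l ∈ range (N+1), H l (N+1-l) + H (N+1) 0 := by
      rw [sum_range_succ]
      congr 2
      omega
    rw [h3, sum_range_one]
    ring

lemma aux_swap (N : ℕ) (K : ℕ → ℕ → ENNReal) :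
    ∑ j ∈ range (N+1), ∑ l ∈ range (N+1-j), K j l
      = ∑ l ∈ range (N+1), ∑ j ∈ range (N+1-l), K j l := by
  rw [← aux_tri N (fun a b => K a b), ← aux_tri N (fun a b => K b a)]
  refine sum_congr rfl fun m _ => ?_
  rw [← Finset.sum_range_reflect]
  refine sum_congr rfl fun l hl => ?_
  rw [mem_range] at hl
  congr 1
  all_goals omega

/-- `n`-fold convolution power of a distribution `f` on `ℕ`. -/
noncomputable def convPow (f : ℕ → ENNReal) : ℕ → ℕ → ENNReal
  | 0, m => if m = 0 then 1 else 0
  | n+1, m => ∑ l ∈ range (m+1), f l * convPow f n (m - l)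

/-- Panjer-type recursion for convolution powers. -/
lemma convPow_rec (f : ℕ → ENNReal) (n m : ℕ) :
    (m : ENNReal) * convPow f (n+1) m
      = (n+1 : ℕ) * ∑ l ∈ range (m+1), (l : ENNReal) * f l * convPow f n (m - l) := by
  induction n generalizing m with
  | zero =>
    have h0 : convPow f 1 m = f m := by
      rw [show convPow f 1 m = ∑ l ∈ range (m+1), f l * convPow f 0 (m - l) from rfl]
      rw [Finset.sum_eq_single_of_mem m (self_mem_range_succ m)]
      · simp [convPow]
      · intro l hl hne
        rw [mem_range] at hl
        have : ¬ (m - l = 0) := by omega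
        simp [convPow, this]
    rw [h0, Finset.sum_eq_single_of_mem m (self_mem_range_succ m)]
    · simp [convPow]
    · intro l hl hne
      rw [mem_range] at hl
      have : ¬ (m - l = 0) := by omega
      simp [convPow, this]
  | succ n ih =>
    have hdef : convPow f (n+2) m = ∑ j ∈ range (m+1), f j * convPow f (n+1) (m - j) := rfl
    rw [hdef, Finset.mul_sum]
    have hterm : ∀ j ∈ range (m+1),
        (m : ENNReal) * (f j * convPow f (n+1) (m - j))
          = (j : ENNReal) * f j * convPow f (n+1) (m - j)
            + f j * ((n+1 : ℕ) * ∑ l ∈ range ((m-j)+1),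
                (l : ENNReal) * f l * convPow f n (m - j - l)) := by
      intro j hj
      rw [mem_range] at hj
      have hm : (m : ENNReal) = (j : ENNReal) + ((m - j : ℕ) : ENNReal) := by
        rw [← Nat.cast_add]
        congr 1
        omega
      rw [← ih (m - j), hm]
      ring
    rw [sum_congr rfl hterm, sum_add_distrib]
    have hswap : ∑ j ∈ range (m+1), f j * ((n+1 : ℕ) * ∑ l ∈ range ((m-j)+1),
            (l : ENNReal) * f l * convPow f n (m - j - l))
        = (n+1 : ℕ) * ∑ l ∈ range (m+1), (l : ENNReal) * f l * convPow f (n+1) (m - l) := by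
      have e1 : ∀ j ∈ range (m+1), f j * ((n+1 : ℕ) * ∑ l ∈ range ((m-j)+1),
            (l : ENNReal) * f l * convPow f n (m - j - l))
          = (n+1 : ℕ) * ∑ l ∈ range (m+1-j),
              ((l : ENNReal) * f l * (f j * convPow f n (m - l - j))) := by
        intro j hj
        rw [mem_range] at hj
        have : (m - j) + 1 = m + 1 - j := by omega
        rw [this, mul_left_comm]
        congr 1
        rw [Finset.mul_sum]
        refine sum_congr rfl fun l hl => ?_
        have h4 : m - j - l = m - l - j := by omega
        rw [h4]; ring
      rw [sum_congr rfl e1, ← Finset.mul_sum]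
      congr 1
      rw [aux_swap m (fun j l => (l : ENNReal) * f l * (f j * convPow f n (m - l - j)))]
      refine sum_congr rfl fun l hl => ?_
      rw [mem_range] at hl
      have h2 : m + 1 - l = (m - l) + 1 := by omega
      rw [h2, show convPow f (n+1) (m-l)
        = ∑ j ∈ range ((m-l)+1), f j * convPow f n (m - l - j) from rfl]
      rw [Finset.mul_sum]
    rw [hswap]
    push_cast
    ring

/-- If `X₁ = ∑_{j=1}^{M₁} B_j` is compound Poisson (frequency `M₁` Poisson
with parameter `λ₁ > 0`, i.i.d. ℕ-valued severities `B_j` with `E[B₁] < ∞`, independent of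
`M₁`) and `X₁` is independent of `S₋₁`, then for every `k ≥ 1`,
`E[X₁ · 1_{S=k}] = λ₁ ∑_{l=1}^{k} l P(B₁ = l) P(S = k-l)`. -/
theorem expected_allocation_compound_poisson
    {Ω : Type*} [MeasurableSpace Ω] (μ : Measure Ω) [IsProbabilityMeasure μ]
    (M : Ω → ℕ) (B : ℕ → Ω → ℕ)
    (hM : Measurable M) (hB : ∀ j, Measurable (B j))
    (lam : ℝ) (hlam : 0 < lam)
    (hpois : ∀ k : ℕ, (μ {ω | M ω = k}).toReal
      = Real.exp (-lam) * lam ^ k / (Nat.factorial k))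
    (hBint : Integrable (fun ω => (B 0 ω : ℝ)) μ)
    (hBiid : ∀ j, ∀ k : ℕ, μ {ω | B j ω = k} = μ {ω | B 0 ω = k})
    (hMBindep : iIndepFun
      (fun o : Option ℕ => Option.elim o M B) μ)
    (X1 : Ω → ℕ) (hX1 : ∀ ω, X1 ω = ∑ j ∈ Finset.range (M ω), B j ω)
    (Sm : Ω → ℕ) (hSm : Measurable Sm)
    (hindep : IndepFun X1 Sm μ)
    (S : Ω → ℕ) (hS : ∀ ω, S ω = X1 ω + Sm ω) :
    ∀ k : ℕ, 1 ≤ k →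
      ∫ ω in {ω | S ω = k}, (X1 ω : ℝ) ∂μ
        = lam * ∑ l ∈ Finset.Icc 1 k,
            (l : ℝ) * (μ {ω | B 0 ω = l}).toReal * (μ {ω | S ω = k - l}).toReal := by
  classical
  -- notation
  set f : ℕ → ENNReal := fun l => μ {ω | B 0 ω = l} with hfdef
  set T : ℕ → Ω → ℕ := fun n ω => ∑ j ∈ Finset.range n, B j ω with hTdef
  have hTmeas : ∀ n, Measurable (T n) := fun n => Finset.measurable_sum _ (fun j _ => hB j)
  -- independence facts extracted from `hMBindep`
  have hmeasF : ∀ o : Option ℕ, Measurable (Option.elim o M B) := by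
    intro o; cases o with
    | none => exact hM
    | some j => exact hB j
  have hsum_image : ∀ n : ℕ, (∑ o ∈ (Finset.range n).image some, Option.elim o M B) = T n := by
    intro n
    rw [Finset.sum_image (by intro x _ y _ h; exact Option.some_injective ℕ h)]
    funext ω
    simp [Finset.sum_apply, hTdef]
  have hTM : ∀ n, IndepFun (T n) M μ := by
    intro n
    have h := hMBindep.indepFun_finsetSum_of_notMem hmeasF
      (s := (Finset.range n).image some) (i := none) (by simp)
    rwa [hsum_image] at h
  have hTB : ∀ n, IndepFun (T n) (B n) μ := by
    intro n
    have h := hMBindep.indepFun_finsetSum_of_notMem hmeasF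
      (s := (Finset.range n).image some) (i := some n) (by simp)
    rwa [hsum_image] at h
  -- distribution of partial sums
  have hTdist : ∀ n m, μ {ω | T n ω = m} = convPow f n m := by
    intro n
    induction n with
    | zero =>
      intro m
      by_cases hm : m = 0
      · subst hm
        have : {ω : Ω | T 0 ω = 0} = Set.univ := by
          ext ω; simp [hTdef]
        rw [this]
        simp [convPow]
      · have : {ω : Ω | T 0 ω = m} = ∅ := by
          ext ω; simp [hTdef]; omega
        rw [this]
        simp [convPow, hm]
    | succ n ih =>
      intro m
      have hsucc : ∀ ω, T (n+1) ω = T n ω + B n ω := fun ω => Finset.sum_range_succ _ _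
      have hset : {ω | T (n+1) ω = m}
          = ⋃ l ∈ Finset.range (m+1), ({ω | B n ω = l} ∩ {ω | T n ω = m - l}) := by
        ext ω
        simp only [Set.mem_setOf_eq, Set.mem_iUnion, Set.mem_inter_iff, Finset.mem_range,
          hsucc ω, exists_prop]
        constructor
        · intro h
          exact ⟨B n ω, by omega, rfl, by omega⟩
        · rintro ⟨l, hl, hBl, hTl⟩
          omega
      rw [hset, measure_biUnion_finset]
      · refine Finset.sum_congr rfl fun l hl => ?_
        have hmul := ((hTB n).symm).measure_inter_preimage_eq_mul {l} {m - l}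
          (measurableSet_singleton l) (measurableSet_singleton (m - l))
        have : μ ({ω | B n ω = l} ∩ {ω | T n ω = m - l})
            = μ {ω | B n ω = l} * μ {ω | T n ω = m - l} := hmul
        rw [this, hBiid n l, ih (m - l)]
      · intro l hl l' hl' hne
        simp only [Function.onFun]
        refine Set.disjoint_left.mpr fun ω hω hω' => hne ?_
        rw [← hω.1, ← hω'.1]
      · intro l hl
        exact ((hB n) (measurableSet_singleton l)).inter
          ((hTmeas n) (measurableSet_singleton (m - l)))
  -- distribution of X1
  have hX1set : ∀ m : ℕ, {ω | X1 ω = m} = ⋃ n : ℕ, ({ω | M ω = n} ∩ {ω | T n ω = m}) := by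
    intro m
    ext ω
    simp only [Set.mem_setOf_eq, Set.mem_iUnion, Set.mem_inter_iff]
    constructor
    · intro h
      exact ⟨M ω, rfl, by rw [← h, hX1 ω]⟩
    · rintro ⟨n, hn, hTn⟩
      rw [hX1 ω, ← hTn, hn]
  have hX1meas : ∀ m : ℕ, MeasurableSet {ω | X1 ω = m} := by
    intro m
    rw [hX1set m]
    exact MeasurableSet.iUnion fun n =>
      (hM (measurableSet_singleton n)).inter ((hTmeas n) (measurableSet_singleton m))
  have hPX : ∀ m, μ {ω | X1 ω = m} = ∑' n, μ {ω | M ω = n} * convPow f n m := by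
    intro m
    rw [hX1set m, measure_iUnion]
    · refine tsum_congr fun n => ?_
      have hmul := ((hTM n).symm).measure_inter_preimage_eq_mul {n} {m}
        (measurableSet_singleton n) (measurableSet_singleton m)
      have : μ ({ω | M ω = n} ∩ {ω | T n ω = m})
          = μ {ω | M ω = n} * μ {ω | T n ω = m} := hmul
      rw [this, hTdist n m]
    · intro n n' hne
      simp only [Function.onFun]
      refine Set.disjoint_left.mpr fun ω hω hω' => hne ?_
      rw [← hω.1, ← hω'.1]
    · exact fun n =>
        (hM (measurableSet_singleton n)).inter ((hTmeas n) (measurableSet_singleton m))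
  -- the Poisson step relation
  have hp_ne_top : ∀ n : ℕ, μ {ω | M ω = n} ≠ ⊤ := fun n => measure_ne_top μ _
  have hstep : ∀ n : ℕ, ((n+1 : ℕ) : ENNReal) * μ {ω | M ω = n+1}
      = ENNReal.ofReal lam * μ {ω | M ω = n} := by
    intro n
    have h1 : (((n+1 : ℕ) : ENNReal) * μ {ω | M ω = n+1}).toReal
        = (ENNReal.ofReal lam * μ {ω | M ω = n}).toReal := by
      rw [ENNReal.toReal_mul, ENNReal.toReal_mul, ENNReal.toReal_natCast,
        ENNReal.toReal_ofReal hlam.le, hpois, hpois, Nat.factorial_succ]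
      have h2 : (Nat.factorial n : ℝ) ≠ 0 := Nat.cast_ne_zero.mpr (Nat.factorial_ne_zero n)
      have h3 : ((n:ℝ) + 1) ≠ 0 := by positivity
      push_cast
      field_simp
      ring
    exact (ENNReal.toReal_eq_toReal_iff'
      (ENNReal.mul_ne_top (ENNReal.natCast_ne_top _) (hp_ne_top _))
      (ENNReal.mul_ne_top ENNReal.ofReal_ne_top (hp_ne_top _))).mp h1
  -- core identity
  have hcore : ∀ m : ℕ, (m : ENNReal) * μ {ω | X1 ω = m}
      = ENNReal.ofReal lam * ∑ l ∈ Finset.range (m+1),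
          (l : ENNReal) * f l * μ {ω | X1 ω = m - l} := by
    intro m
    set A : ℕ → ENNReal := fun n => μ {ω | M ω = n} * ((m : ENNReal) * convPow f n m)
      with hA
    have h1 : (m : ENNReal) * μ {ω | X1 ω = m} = ∑' n, A n := by
      rw [hPX m, ← ENNReal.tsum_mul_left]
      exact tsum_congr fun n => by rw [hA]; ring
    have h2 : ∑' n, A n = A 0 + ∑' n, A (n+1) :=
      tsum_eq_zero_add' ENNReal.summable
    have h3 : A 0 = 0 := by
      have : (m : ENNReal) * convPow f 0 m = 0 := by
        by_cases hm : m = 0 <;> simp [convPow, hm]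
      rw [hA]
      simp only
      rw [this, mul_zero]
    have h4 : ∀ n : ℕ, A (n+1) = ENNReal.ofReal lam * (μ {ω | M ω = n}
        * ∑ l ∈ Finset.range (m+1), (l : ENNReal) * f l * convPow f n (m - l)) := by
      intro n
      rw [hA]
      simp only
      rw [convPow_rec f n m]
      calc μ {ω | M ω = n+1}
          * (((n+1:ℕ) : ENNReal) * ∑ l ∈ Finset.range (m+1),
              (l : ENNReal) * f l * convPow f n (m - l))
          = (((n+1:ℕ) : ENNReal) * μ {ω | M ω = n+1})
            * ∑ l ∈ Finset.range (m+1), (l : ENNReal) * f l * convPow f n (m - l) := by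
            ring
        _ = (ENNReal.ofReal lam * μ {ω | M ω = n})
            * ∑ l ∈ Finset.range (m+1), (l : ENNReal) * f l * convPow f n (m - l) := by
            rw [hstep n]
        _ = ENNReal.ofReal lam * (μ {ω | M ω = n}
            * ∑ l ∈ Finset.range (m+1), (l : ENNReal) * f l * convPow f n (m - l)) := by
            ring
    rw [h1, h2, h3, zero_add, tsum_congr h4, ENNReal.tsum_mul_left]
    congr 1
    have h5 : ∀ n : ℕ, μ {ω | M ω = n}
        * ∑ l ∈ Finset.range (m+1), (l : ENNReal) * f l * convPow f n (m - l)
        = ∑ l ∈ Finset.range (m+1),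
            μ {ω | M ω = n} * ((l : ENNReal) * f l * convPow f n (m - l)) :=
      fun n => Finset.mul_sum _ _ _
    rw [tsum_congr h5, Summable.tsum_finsetSum (fun l _ => ENNReal.summable)]
    refine Finset.sum_congr rfl fun l hl => ?_
    rw [hPX (m - l), ← ENNReal.tsum_mul_left]
    exact tsum_congr fun n => by ring
  -- distribution of S
  have hSmeas : ∀ r : ℕ, MeasurableSet {ω | S ω = r} := by
    intro r
    have : {ω | S ω = r} = ⋃ m ∈ Finset.range (r+1),
        ({ω | X1 ω = m} ∩ {ω | Sm ω = r - m}) := by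
      ext ω
      simp only [Set.mem_setOf_eq, Set.mem_iUnion, Set.mem_inter_iff, Finset.mem_range,
        hS ω, exists_prop]
      constructor
      · intro h
        exact ⟨X1 ω, by omega, rfl, by omega⟩
      · rintro ⟨m, hm, h1, h2⟩
        omega
    rw [this]
    exact MeasurableSet.biUnion (Finset.range (r+1)).countable_toSet fun m _ =>
      (hX1meas m).inter (hSm (measurableSet_singleton (r - m)))
  have hSset : ∀ r : ℕ, {ω | S ω = r} = ⋃ m ∈ Finset.range (r+1),
      ({ω | X1 ω = m} ∩ {ω | Sm ω = r - m}) := by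
    intro r
    ext ω
    simp only [Set.mem_setOf_eq, Set.mem_iUnion, Set.mem_inter_iff, Finset.mem_range,
      hS ω, exists_prop]
    constructor
    · intro h
      exact ⟨X1 ω, by omega, rfl, by omega⟩
    · rintro ⟨m, hm, h1, h2⟩
      omega
  have hdisj : ∀ r : ℕ, (↑(Finset.range (r+1)) : Set ℕ).Pairwise (Function.onFun Disjoint
      (fun m => {ω | X1 ω = m} ∩ {ω | Sm ω = r - m})) := by
    intro r m hm m' hm' hne
    simp only [Function.onFun]
    refine Set.disjoint_left.mpr fun ω hω hω' => hne ?_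
    rw [← hω.1, ← hω'.1]
  have hpiece_meas : ∀ r : ℕ, ∀ m ∈ Finset.range (r+1),
      MeasurableSet ({ω | X1 ω = m} ∩ {ω | Sm ω = r - m}) := fun r m _ =>
    (hX1meas m).inter (hSm (measurableSet_singleton (r - m)))
  have hAmul : ∀ (m j : ℕ), μ ({ω | X1 ω = m} ∩ {ω | Sm ω = j})
      = μ {ω | X1 ω = m} * μ {ω | Sm ω = j} := by
    intro m j
    exact hindep.measure_inter_preimage_eq_mul {m} {j}
      (measurableSet_singleton m) (measurableSet_singleton j)
  have hSdist : ∀ r : ℕ, μ {ω | S ω = r}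
      = ∑ m ∈ Finset.range (r+1), μ {ω | X1 ω = m} * μ {ω | Sm ω = r - m} := by
    intro r
    rw [hSset r, measure_biUnion_finset (hdisj r) (hpiece_meas r)]
    exact Finset.sum_congr rfl fun m _ => hAmul m (r - m)
  -- now the main computation
  intro k hk
  -- integral decomposition
  have hint : ∫ ω in {ω | S ω = k}, (X1 ω : ℝ) ∂μ
      = ∑ m ∈ Finset.range (k+1),
          (m : ℝ) * (μ {ω | X1 ω = m} * μ {ω | Sm ω = k - m}).toReal := by
    rw [hSset k]
    rw [integral_biUnion_finset (Finset.range (k+1)) (hpiece_meas k) (hdisj k)]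
    · refine Finset.sum_congr rfl fun m hm => ?_
      have heq : Set.EqOn (fun ω => (X1 ω : ℝ)) (fun _ => (m : ℝ))
          ({ω | X1 ω = m} ∩ {ω | Sm ω = k - m}) := fun ω hω => by
        simp only
        rw [hω.1]
      rw [setIntegral_congr_fun (hpiece_meas k m hm) heq, setIntegral_const]
      rw [measureReal_def, hAmul m (k - m)]
      simp [mul_comm]
    · intro m hm
      have heq : Set.EqOn (fun _ => (m : ℝ)) (fun ω => (X1 ω : ℝ))
          ({ω | X1 ω = m} ∩ {ω | Sm ω = k - m}) := fun ω hω => by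
        simp only
        rw [hω.1]
      exact (integrableOn_const (measure_ne_top μ _)).congr_fun
        heq (hpiece_meas k m hm)
  -- the ENNReal identity
  have hENN : ∑ m ∈ Finset.range (k+1),
        (m : ENNReal) * (μ {ω | X1 ω = m} * μ {ω | Sm ω = k - m})
      = ENNReal.ofReal lam * ∑ l ∈ Finset.Icc 1 k,
          (l : ENNReal) * f l * μ {ω | S ω = k - l} := by
    have htri := aux_tri k
      (fun a b => (a : ENNReal) * f a * (μ {ω | X1 ω = b} * μ {ω | Sm ω = k - a - b}))
    calc ∑ m ∈ Finset.range (k+1),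
          (m : ENNReal) * (μ {ω | X1 ω = m} * μ {ω | Sm ω = k - m})
        = ∑ m ∈ Finset.range (k+1), ((m : ENNReal) * μ {ω | X1 ω = m})
            * μ {ω | Sm ω = k - m} :=
          Finset.sum_congr rfl fun m _ => by ring
      _ = ENNReal.ofReal lam * ∑ m ∈ Finset.range (k+1), ∑ l ∈ Finset.range (m+1),
            ((l : ENNReal) * f l * (μ {ω | X1 ω = m - l} * μ {ω | Sm ω = k - m})) := by
          rw [Finset.mul_sum]
          refine Finset.sum_congr rfl fun m _ => ?_
          rw [hcore m, mul_assoc, Finset.sum_mul]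
          congr 1
          exact Finset.sum_congr rfl fun l _ => by ring
      _ = ENNReal.ofReal lam * ∑ l ∈ Finset.range (k+1), ∑ j ∈ Finset.range (k+1-l),
            (l : ENNReal) * f l * (μ {ω | X1 ω = j} * μ {ω | Sm ω = k - l - j}) := by
          congr 1
          rw [← htri]
          refine Finset.sum_congr rfl fun m hm => Finset.sum_congr rfl fun l hl => ?_
          rw [Finset.mem_range] at hm hl
          show (l : ENNReal) * f l * (μ {ω | X1 ω = m - l} * μ {ω | Sm ω = k - m})
            = (l : ENNReal) * f l * (μ {ω | X1 ω = m - l} * μ {ω | Sm ω = k - l - (m - l)})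
          have h1 : k - l - (m - l) = k - m := by omega
          rw [h1]
      _ = ENNReal.ofReal lam * ∑ l ∈ Finset.range (k+1),
            (l : ENNReal) * f l * μ {ω | S ω = k - l} := by
          congr 1
          refine Finset.sum_congr rfl fun l hl => ?_
          rw [Finset.mem_range] at hl
          have h1 : k + 1 - l = (k - l) + 1 := by omega
          rw [h1, hSdist (k - l), Finset.mul_sum]
      _ = ENNReal.ofReal lam * ∑ l ∈ Finset.Icc 1 k,
            (l : ENNReal) * f l * μ {ω | S ω = k - l} := by
          congr 1
          refine (Finset.sum_subset ?_ ?_).symm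
          · intro l hl
            rw [Finset.mem_Icc] at hl
            rw [Finset.mem_range]
            omega
          · intro l hl hnl
            rw [Finset.mem_range] at hl
            rw [Finset.mem_Icc] at hnl
            have : l = 0 := by omega
            subst this
            simp
  -- put everything together, passing to real numbers
  rw [hint]
  have hLHS : ∑ m ∈ Finset.range (k+1),
      (m : ℝ) * (μ {ω | X1 ω = m} * μ {ω | Sm ω = k - m}).toReal
      = (∑ m ∈ Finset.range (k+1),
          (m : ENNReal) * (μ {ω | X1 ω = m} * μ {ω | Sm ω = k - m})).toReal := by
    rw [ENNReal.toReal_sum]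
    · refine Finset.sum_congr rfl fun m _ => ?_
      simp [ENNReal.toReal_mul, ENNReal.toReal_natCast]
    · intro m _
      exact ENNReal.mul_ne_top (ENNReal.natCast_ne_top _)
        (ENNReal.mul_ne_top (measure_ne_top μ _) (measure_ne_top μ _))
  rw [hLHS, hENN, ENNReal.toReal_mul, ENNReal.toReal_ofReal hlam.le]
  congr 1
  rw [ENNReal.toReal_sum]
  · refine Finset.sum_congr rfl fun l _ => ?_
    simp [ENNReal.toReal_mul, ENNReal.toReal_natCast, mul_assoc, hfdef]
  · intro l _
    exact ENNReal.mul_ne_top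
      (ENNReal.mul_ne_top (ENNReal.natCast_ne_top _) (measure_ne_top μ _))
      (measure_ne_top μ _)
end

section
/- Let X₁,…,Xₙ be ℕ-valued random variables on a probability space with 0 < E[X₁] < ∞, S = X₁+⋯+Xₙ and S₋₁ = X₂+⋯+Xₙ, and suppose X₁ is independent of S₋₁. Then for every k ∈ ℕ, E[X₁ · 1_{\{S=k\}}] = E[X₁] · ∑_{j=0}^{k} f_{X̃₁}(j) · P(S₋₁ = k−j), where f_{X̃₁}(j) = j · P(X₁ = j) / E[X₁] is the probability mass function of the size-biased transform of X₁; that is, E[X₁ · 1_{\{S=k\}}] equals E[X₁] times the probability that an independent sum of the size-biased transform of X₁ and S₋₁ equals k. -/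
open MeasureTheory ProbabilityTheory

/-!
Split `{S = k}` according to the value `j ≤ k` of `X₁`, so that `S₋₁ = k - j` on each piece.
On the piece `X₁` is the constant `j`, and independence factors its measure, giving
`E[X₁ · 1_{S=k}] = ∑ⱼ j P(X₁ = j) P(S₋₁ = k - j)`; the factor `E[X₁]` in front cancels against
the normalisation of the size-biased pmf.
-/

theorem Set.setOf_add_eq_eq_biUnion {α : Type*} (X Y : α → ℕ) (k : ℕ) :
    {a | X a + Y a = k} = ⋃ j ∈ Finset.range (k + 1), {a | X a = j} ∩ {a | Y a = k - j} := by
  ext a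
  simp only [Set.mem_ofPred_eq, Set.mem_iUnion, Set.mem_inter_iff, Finset.mem_range]
  constructor
  · rintro rfl
    exact ⟨X a, by omega, rfl, by omega⟩
  · rintro ⟨j, hj, hXj, hYj⟩
    omega

namespace ProbabilityTheory.IndepFun

variable {Ω : Type*} [MeasurableSpace Ω] {μ : Measure Ω} {X Y : Ω → ℕ}

theorem setIntegral_comp_inter_eq (hX : Measurable X) (hY : Measurable Y)
    (h : IndepFun X Y μ) (f : ℕ → ℝ) (j m : ℕ) :
    ∫ ω in {ω | X ω = j} ∩ {ω | Y ω = m}, f (X ω) ∂μ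
      = f j * μ.real {ω | X ω = j} * μ.real {ω | Y ω = m} := by
  have hprod : μ ({ω | X ω = j} ∩ {ω | Y ω = m}) = μ {ω | X ω = j} * μ {ω | Y ω = m} :=
    h.measure_inter_preimage_eq_mul {j} {m} (measurableSet_singleton j) (measurableSet_singleton m)
  calc ∫ ω in {ω | X ω = j} ∩ {ω | Y ω = m}, f (X ω) ∂μ
      = ∫ _ in {ω | X ω = j} ∩ {ω | Y ω = m}, f j ∂μ :=
        setIntegral_congr_fun ((hX (measurableSet_singleton j)).inter
          (hY (measurableSet_singleton m))) fun ω hω => by rw [hω.1]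
    _ = f j * μ.real {ω | X ω = j} * μ.real {ω | Y ω = m} := by
        rw [setIntegral_const, smul_eq_mul, measureReal_def, hprod, ENNReal.toReal_mul,
          measureReal_def, measureReal_def]
        ring

theorem setIntegral_comp_add_eq_sum [IsFiniteMeasure μ] (hX : Measurable X) (hY : Measurable Y)
    (h : IndepFun X Y μ) (f : ℕ → ℝ) (k : ℕ) :
    ∫ ω in {ω | X ω + Y ω = k}, f (X ω) ∂μ
      = ∑ j ∈ Finset.range (k + 1),
          f j * μ.real {ω | X ω = j} * μ.real {ω | Y ω = k - j} := by
  have hmeas (j m : ℕ) : MeasurableSet ({ω | X ω = j} ∩ {ω | Y ω = m}) :=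
    (hX (measurableSet_singleton j)).inter (hY (measurableSet_singleton m))
  rw [Set.setOf_add_eq_eq_biUnion, integral_biUnion_finset _ (fun j _ => hmeas j (k - j))
    (fun i _ j _ hij => Set.disjoint_left.2 fun ω hi hj => hij (hi.1.symm.trans hj.1))
    (fun j _ => (integrableOn_const (C := f j)).congr_fun (fun ω hω => by rw [hω.1])
      (hmeas j (k - j)))]
  exact Finset.sum_congr rfl fun j _ => h.setIntegral_comp_inter_eq hX hY f j (k - j)

end ProbabilityTheory.IndepFun

theorem expected_allocation_size_biased_general
    {Ω : Type*} [MeasurableSpace Ω] (μ : Measure Ω) [IsProbabilityMeasure μ]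
    (n : ℕ) (X : Fin (n + 1) → Ω → ℕ) (hX : ∀ i, Measurable (X i))
    (hpos : 0 < ∫ ω, (X 0 ω : ℝ) ∂μ)
    (S Sm : Ω → ℕ)
    (hS : ∀ ω, S ω = ∑ i, X i ω)
    (hSm : ∀ ω, Sm ω = ∑ i : Fin n, X i.succ ω)
    (hindep : IndepFun (X 0) Sm μ) :
    ∀ k : ℕ,
      ∫ ω in {ω | S ω = k}, (X 0 ω : ℝ) ∂μ
        = (∫ ω, (X 0 ω : ℝ) ∂μ) *
            ∑ j ∈ Finset.range (k + 1),
              (j * (μ {ω | X 0 ω = j}).toReal / ∫ ω, (X 0 ω : ℝ) ∂μ)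
                * (μ {ω | Sm ω = k - j}).toReal := by
  intro k
  have hS_eq : S = fun ω => X 0 ω + Sm ω := funext fun ω => by rw [hS, hSm, Fin.sum_univ_succ]
  have hSm_meas : Measurable Sm := by
    rw [funext hSm]
    exact Finset.measurable_sum _ fun i _ => hX i.succ
  rw [hS_eq, hindep.setIntegral_comp_add_eq_sum (hX 0) hSm_meas Nat.cast k, Finset.mul_sum]
  refine Finset.sum_congr rfl fun j _ => ?_
  rw [measureReal_def, measureReal_def]
  field_simp

/-- If `X₁` is independent of `S₋₁` and `0 < E[X₁] < ∞`, then for every `k`,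
`E[X₁ · 1_{S=k}] = E[X₁] ∑_{j=0}^{k} f_{X̃₁}(j) P(S₋₁ = k-j)` where
`f_{X̃₁}(j) = j P(X₁ = j)/E[X₁]` is the pmf of the size-biased transform of `X₁`; that is,
the expected allocation equals `E[X₁]` times the probability that an independent sum of the
size-biased transform of `X₁` and `S₋₁` equals `k`. -/
theorem expected_allocation_size_biased
    {Ω : Type*} [MeasurableSpace Ω] (μ : Measure Ω) [IsProbabilityMeasure μ]
    (n : ℕ) (X : Fin (n + 1) → Ω → ℕ) (hX : ∀ i, Measurable (X i))
    (hint : Integrable (fun ω => (X 0 ω : ℝ)) μ)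
    (hpos : 0 < ∫ ω, (X 0 ω : ℝ) ∂μ)
    (S Sm : Ω → ℕ)
    (hS : ∀ ω, S ω = ∑ i, X i ω)
    (hSm : ∀ ω, Sm ω = ∑ i : Fin n, X i.succ ω)
    (hindep : IndepFun (X 0) Sm μ) :
    ∀ k : ℕ,
      ∫ ω in {ω | S ω = k}, (X 0 ω : ℝ) ∂μ
        = (∫ ω, (X 0 ω : ℝ) ∂μ) *
            ∑ j ∈ Finset.range (k + 1),
              (j * (μ {ω | X 0 ω = j}).toReal / ∫ ω, (X 0 ω : ℝ) ∂μ)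
                * (μ {ω | Sm ω = k - j}).toReal :=
  expected_allocation_size_biased_general μ n X hX hpos S Sm hS hSm hindep
end

section
/- Let Θ = (Θ₁,…,Θₙ) be a random vector of nonnegative random variables with E[Θ₁] < ∞, let λ₁,…,λₙ > 0, and let X = (X₁,…,Xₙ) be a random vector of ℕ-valued random variables whose joint probability mass function is the mixed Poisson distribution f_X(x₁,…,xₙ) = E[∏_{i=1}^n e^{−λ_iΘ_i} (λ_iΘ_i)^{x_i} / x_i!] for (x₁,…,xₙ) ∈ ℕⁿ. Set S = X₁+⋯+Xₙ. Then for every t ∈ [0,1], ∑_{k=0}^∞ t^k · E[X₁ · 1_{\{S=k\}}] = λ₁ · t · E[Θ₁ · ∏_{i=1}^n e^{λ_iΘ_i(t−1)}]. -/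
/-!
Both sides are `E[t^S X₁]`. Expanding it over the atoms of the law of `X` and exchanging the
sum with the mixing integral (legitimate in `ℝ≥0∞`, where everything is nonnegative), the
integrand factorises over `i`, since conditionally on `Θ` the `Xᵢ` are independent Poisson with
means `aᵢ = λᵢΘᵢ`: the factor for `i ≠ 1` is `∑ₘ tᵐ P_{aᵢ}(m) = e^{aᵢ(t-1)}`, and the factor for
`i = 1` is `∑ₘ m tᵐ P_{a₁}(m) = a₁ t e^{a₁(t-1)}`. Returning to `ℝ` needs finiteness, which
comes from `E[Θ₁] < ∞` and `e^{aᵢ(t-1)} ≤ 1` for `t ≤ 1`.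
-/

open MeasureTheory ProbabilityTheory

open scoped ENNReal Nat

noncomputable def poissonWeight (a : ℝ) (m : ℕ) : ℝ := Real.exp (-a) * a ^ m / m !

theorem poissonWeight_nonneg {a : ℝ} (ha : 0 ≤ a) (m : ℕ) : 0 ≤ poissonWeight a m := by
  unfold poissonWeight; positivity

@[fun_prop]
theorem measurable_poissonWeight (m : ℕ) : Measurable fun a => poissonWeight a m := by
  unfold poissonWeight; fun_prop

theorem Real.hasSum_pow_div_factorial (x : ℝ) : HasSum (fun m : ℕ => x ^ m / m !) (Real.exp x) := by
  rw [Real.exp_eq_exp_ℝ]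
  exact NormedSpace.expSeries_div_hasSum_exp x

theorem hasSum_pow_mul_poissonWeight (a t : ℝ) :
    HasSum (fun m => t ^ m * poissonWeight a m) (Real.exp (a * (t - 1))) := by
  have hterm : (fun m => t ^ m * poissonWeight a m)
      = fun m => Real.exp (-a) * ((t * a) ^ m / m !) := by
    ext m
    rw [poissonWeight, mul_pow]
    ring
  rw [hterm, show a * (t - 1) = -a + t * a by ring, Real.exp_add]
  exact (Real.hasSum_pow_div_factorial (t * a)).mul_left _

theorem succ_mul_poissonWeight_succ (a : ℝ) (m : ℕ) :
    ((m + 1 : ℕ) : ℝ) * poissonWeight a (m + 1) = a * poissonWeight a m := by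
  simp only [poissonWeight, Nat.factorial_succ, pow_succ]
  push_cast
  field_simp

theorem hasSum_natCast_mul_pow_mul_poissonWeight (a t : ℝ) :
    HasSum (fun m : ℕ => m * (t ^ m * poissonWeight a m)) (a * t * Real.exp (a * (t - 1))) := by
  have hshift : (fun m : ℕ => ((m + 1 : ℕ) : ℝ) * (t ^ (m + 1) * poissonWeight a (m + 1)))
      = fun m => a * t * (t ^ m * poissonWeight a m) := by
    ext m
    rw [mul_left_comm, succ_mul_poissonWeight_succ, pow_succ]
    ring
  rw [← hasSum_nat_add_iff' 1, hshift]
  simpa using (hasSum_pow_mul_poissonWeight a t).mul_left (a * t)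

theorem poissonWeight_le_one {a : ℝ} (ha : 0 ≤ a) (m : ℕ) : poissonWeight a m ≤ 1 := by
  simpa using le_hasSum (hasSum_pow_mul_poissonWeight a 1) m
    fun j _ => by simpa using poissonWeight_nonneg ha j

theorem ENNReal.tsum_ofReal_eq_of_hasSum {α : Type*} {f : α → ℝ} {a : ℝ} (hf : HasSum f a)
    (hf0 : ∀ n, 0 ≤ f n) : ∑' n, ENNReal.ofReal (f n) = ENNReal.ofReal a := by
  rw [← ENNReal.ofReal_tsum_of_nonneg hf0 hf.summable, hf.tsum_eq]

theorem ENNReal.tsum_pi_prod {β : Type*} :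
    ∀ {N : ℕ} (F : Fin N → β → ℝ≥0∞), ∑' x : Fin N → β, ∏ i, F i (x i) = ∏ i, ∑' b, F i b
  | 0, F => by simp
  | N + 1, F => by
    rw [← (Fin.consEquiv fun _ => β).tsum_eq, ENNReal.tsum_prod']
    simp only [Fin.consEquiv, Equiv.coe_fn_mk, Fin.prod_univ_succ, Fin.cons_zero, Fin.cons_succ,
      ENNReal.tsum_mul_left, ENNReal.tsum_mul_right, ENNReal.tsum_pi_prod]

theorem tsum_mul_setLIntegral_preimage_singleton {Ω β : Type*} [MeasurableSpace Ω]
    [MeasurableSpace β] [Countable β] [MeasurableSingletonClass β] {μ : Measure Ω}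
    {S : Ω → β} (hS : Measurable S) (c : β → ℝ≥0∞) {f : Ω → ℝ≥0∞} (hf : Measurable f) :
    ∑' b, c b * ∫⁻ ω in S ⁻¹' {b}, f ω ∂μ = ∫⁻ ω, c (S ω) * f ω ∂μ := by
  have hfibers : ⋃ b, S ⁻¹' {b} = Set.univ := by
    ext ω
    simp
  rw [← setLIntegral_univ, ← hfibers,
    lintegral_iUnion (fun b => hS (measurableSet_singleton b)) (pairwise_disjoint_fiber S)]
  refine tsum_congr fun b => ?_
  rw [← lintegral_const_mul _ hf]
  exact setLIntegral_congr_fun (hS (measurableSet_singleton b)) fun ω hω => by rw [hω]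

theorem lintegral_comp_eq_tsum_mul_measure_preimage {Ω β : Type*} [MeasurableSpace Ω]
    [MeasurableSpace β] [Countable β] [MeasurableSingletonClass β] {μ : Measure Ω}
    {Y : Ω → β} (hY : Measurable Y) (g : β → ℝ≥0∞) :
    ∫⁻ ω, g (Y ω) ∂μ = ∑' y, g y * μ (Y ⁻¹' {y}) := by
  rw [← lintegral_map (measurable_of_countable g) hY, lintegral_countable']
  exact tsum_congr fun y => by rw [Measure.map_apply hY (measurableSet_singleton y)]

theorem tsum_pow_mul_setIntegral_eq_toReal_lintegral {Ω : Type*} [MeasurableSpace Ω]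
    {μ : Measure Ω} {S f : Ω → ℕ} (hS : Measurable S) (hf : Measurable f) {t : ℝ} (ht : 0 ≤ t)
    (hfin : ∫⁻ ω, ENNReal.ofReal (t ^ S ω) * f ω ∂μ ≠ ∞) :
    ∑' k : ℕ, t ^ k * ∫ ω in {ω | S ω = k}, (f ω : ℝ) ∂μ
      = (∫⁻ ω, ENNReal.ofReal (t ^ S ω) * f ω ∂μ).toReal := by
  have hterm : ∀ k : ℕ, t ^ k * ∫ ω in {ω | S ω = k}, (f ω : ℝ) ∂μ
      = (ENNReal.ofReal (t ^ k) * ∫⁻ ω in S ⁻¹' {k}, f ω ∂μ).toReal := by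
    intro k
    rw [integral_eq_lintegral_of_nonneg_ae (ae_of_all _ fun _ => Nat.cast_nonneg _)
      (by fun_prop), ENNReal.toReal_mul, ENNReal.toReal_ofReal (pow_nonneg ht k)]
    simp only [ENNReal.ofReal_natCast]
    rfl
  have hsum := tsum_mul_setLIntegral_preimage_singleton (μ := μ) hS
    (fun k => ENNReal.ofReal (t ^ k)) (by fun_prop : Measurable fun ω => (f ω : ℝ≥0∞))
  rw [tsum_congr hterm, ← ENNReal.tsum_toReal_eq (ENNReal.ne_top_of_tsum_ne_top (hsum ▸ hfin)),
    hsum]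

theorem measure_eq_lintegral_ofReal_of_toReal_eq {Ω Ω' : Type*} [MeasurableSpace Ω]
    [MeasurableSpace Ω'] {μ : Measure Ω} [IsFiniteMeasure μ] {μ' : Measure Ω'} {s : Set Ω}
    {f : Ω' → ℝ} (hf : Integrable f μ') (hf0 : 0 ≤ᵐ[μ'] f) (h : (μ s).toReal = ∫ ω', f ω' ∂μ') :
    μ s = ∫⁻ ω', ENNReal.ofReal (f ω') ∂μ' := by
  rw [← ofReal_integral_eq_lintegral_ofReal hf hf0, ← h, ENNReal.ofReal_toReal (measure_ne_top μ s)]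

theorem tsum_pow_sum_mul_apply_mul_prod_poissonWeight {N : ℕ} {a : Fin N → ℝ}
    (ha : ∀ i, 0 ≤ a i) {t : ℝ} (ht : 0 ≤ t) (j : Fin N) :
    ∑' x : Fin N → ℕ, ENNReal.ofReal (t ^ ∑ i, x i) * x j
        * ENNReal.ofReal (∏ i, poissonWeight (a i) (x i))
      = ENNReal.ofReal (a j * t * ∏ i, Real.exp (a i * (t - 1))) := by
  set G : Fin N → ℕ → ℝ := fun i m =>
    (if i = j then (m : ℝ) else 1) * (t ^ m * poissonWeight (a i) m)
  have hG0 : ∀ i m, 0 ≤ G i m := fun i m => by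
    have := poissonWeight_nonneg (ha i) m
    simp only [G]
    split_ifs <;> positivity
  have hfactor : ∀ x : Fin N → ℕ, ENNReal.ofReal (t ^ ∑ i, x i) * x j
      * ENNReal.ofReal (∏ i, poissonWeight (a i) (x i)) = ∏ i, ENNReal.ofReal (G i (x i)) := by
    intro x
    rw [← ENNReal.ofReal_prod_of_nonneg fun i _ => hG0 i (x i), ← ENNReal.ofReal_natCast,
      ← ENNReal.ofReal_mul (by positivity), ← ENNReal.ofReal_mul (by positivity)]
    simp only [G, Finset.prod_mul_distrib, Fintype.prod_ite_eq', Finset.prod_pow_eq_pow_sum]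
    ring_nf
  have hsum : ∀ i, ∑' m, ENNReal.ofReal (G i m)
      = ENNReal.ofReal ((if i = j then a j * t else 1) * Real.exp (a i * (t - 1))) := by
    intro i
    refine ENNReal.tsum_ofReal_eq_of_hasSum ?_ (hG0 i)
    by_cases hij : i = j
    · subst hij
      simpa [G] using hasSum_natCast_mul_pow_mul_poissonWeight (a i) t
    · simpa [G, hij] using hasSum_pow_mul_poissonWeight (a i) t
  rw [tsum_congr hfactor, ENNReal.tsum_pi_prod fun i m => ENNReal.ofReal (G i m),
    Finset.prod_congr rfl fun i _ => hsum i,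
    ← ENNReal.ofReal_prod_of_nonneg fun i _ => by have := ha j; split_ifs <;> positivity,
    Finset.prod_mul_distrib, Fintype.prod_ite_eq']

theorem MeasureTheory.Integrable.mul_prod_exp_of_nonpos {Ω ι : Type*} [MeasurableSpace Ω] [Fintype ι]
    {μ : Measure Ω} {θ : Ω → ℝ} (hθ : Integrable θ μ) {b : ι → Ω → ℝ} (hb : ∀ i, Measurable (b i))
    (hb0 : ∀ i ω, b i ω ≤ 0) : Integrable (fun ω => θ ω * ∏ i, Real.exp (b i ω)) μ := by
  refine hθ.mul_bdd (c := 1) (by fun_prop) (ae_of_all _ fun ω => ?_)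
  rw [Real.norm_of_nonneg (Finset.prod_nonneg fun _ _ => (Real.exp_pos _).le)]
  exact Finset.prod_le_one (fun _ _ => (Real.exp_pos _).le) fun i _ =>
    Real.exp_le_one_iff.mpr (hb0 i ω)

/-- The law of `X` under `μ` is the `μ'`-mixture of product Poisson laws with means `a ω' i`
(in the theorem, `a ω' i = λᵢ Θᵢ(ω')`). -/
def IsMixedPoisson {Ω Ω' : Type*} [MeasurableSpace Ω] [MeasurableSpace Ω'] {N : ℕ}
    (X : Ω → Fin N → ℕ) (μ : Measure Ω) (a : Ω' → Fin N → ℝ) (μ' : Measure Ω') : Prop :=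
  ∀ x, (μ (X ⁻¹' {x})).toReal = ∫ ω', ∏ i, poissonWeight (a ω' i) (x i) ∂μ'

namespace IsMixedPoisson

variable {Ω Ω' : Type*} [MeasurableSpace Ω] [MeasurableSpace Ω'] {N : ℕ} {X : Ω → Fin N → ℕ}
  {μ : Measure Ω} {a : Ω' → Fin N → ℝ} {μ' : Measure Ω'} [IsFiniteMeasure μ] [IsFiniteMeasure μ']

theorem measure_preimage_singleton (h : IsMixedPoisson X μ a μ') (ha : ∀ ω' i, 0 ≤ a ω' i)
    (ha_meas : Measurable a) (x : Fin N → ℕ) :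
    μ (X ⁻¹' {x}) = ∫⁻ ω', ENNReal.ofReal (∏ i, poissonWeight (a ω' i) (x i)) ∂μ' := by
  have hp0 : ∀ ω', 0 ≤ ∏ i, poissonWeight (a ω' i) (x i) := fun ω' =>
    Finset.prod_nonneg fun i _ => poissonWeight_nonneg (ha ω' i) _
  have hp : Integrable (fun ω' => ∏ i, poissonWeight (a ω' i) (x i)) μ' := by
    refine Integrable.of_bound (Measurable.aestronglyMeasurable (by fun_prop)) 1
      (ae_of_all _ fun ω' => ?_)
    rw [Real.norm_of_nonneg (hp0 ω')]
    exact Finset.prod_le_one (fun i _ => poissonWeight_nonneg (ha ω' i) _)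
      fun i _ => poissonWeight_le_one (ha ω' i) _
  exact measure_eq_lintegral_ofReal_of_toReal_eq hp (ae_of_all _ hp0) (h x)

theorem lintegral_pow_sum_mul_apply (h : IsMixedPoisson X μ a μ') (ha : ∀ ω' i, 0 ≤ a ω' i)
    (ha_meas : Measurable a) (hX : Measurable X) {t : ℝ} (ht : 0 ≤ t) (j : Fin N) :
    ∫⁻ ω, ENNReal.ofReal (t ^ ∑ i, X ω i) * X ω j ∂μ
      = ∫⁻ ω', ENNReal.ofReal (a ω' j * t * ∏ i, Real.exp (a ω' i * (t - 1))) ∂μ' := by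
  calc ∫⁻ ω, ENNReal.ofReal (t ^ ∑ i, X ω i) * X ω j ∂μ
      = ∑' x, ENNReal.ofReal (t ^ ∑ i, x i) * x j * μ (X ⁻¹' {x}) :=
        lintegral_comp_eq_tsum_mul_measure_preimage hX
          fun x => ENNReal.ofReal (t ^ ∑ i, x i) * x j
    _ = ∫⁻ ω', ∑' x : Fin N → ℕ, ENNReal.ofReal (t ^ ∑ i, x i) * x j
          * ENNReal.ofReal (∏ i, poissonWeight (a ω' i) (x i)) ∂μ' := by
        rw [lintegral_tsum fun x => by fun_prop]
        refine tsum_congr fun x => ?_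
        rw [h.measure_preimage_singleton ha ha_meas, lintegral_const_mul' _ _ (by finiteness)]
    _ = _ := lintegral_congr fun ω' =>
        tsum_pow_sum_mul_apply_mul_prod_poissonWeight (ha ω') ht j

end IsMixedPoisson

/-- For a multivariate mixed Poisson random vector `X = (X₁,…,Xₙ)` with
nonnegative mixing vector `Θ = (Θ₁,…,Θₙ)` (with `E[Θ₁] < ∞`) and intensities `λ_i > 0`,
i.e. with joint pmf `f_X(x) = E[∏_i e^{-λ_iΘ_i}(λ_iΘ_i)^{x_i}/x_i!]`, and `S = X₁+⋯+Xₙ`,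
for every `t ∈ [0,1]`:
`∑_{k=0}^∞ t^k E[X₁ · 1_{S=k}] = λ₁ t E[Θ₁ ∏_{i=1}^n e^{λ_iΘ_i(t-1)}]`. -/
theorem ogf_expected_allocation_mixed_poisson
    {Ω Ω' : Type*} [MeasurableSpace Ω] [MeasurableSpace Ω']
    (μ : Measure Ω) (μ' : Measure Ω')
    [IsProbabilityMeasure μ] [IsProbabilityMeasure μ']
    (n : ℕ) (Θ : Fin (n + 1) → Ω' → ℝ)
    (hΘmeas : ∀ i, Measurable (Θ i))
    (hΘnn : ∀ i ω', 0 ≤ Θ i ω')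
    (hΘint : Integrable (fun ω' => Θ 0 ω') μ')
    (lam : Fin (n + 1) → ℝ) (hlam : ∀ i, 0 < lam i)
    (X : Fin (n + 1) → Ω → ℕ) (hX : ∀ i, Measurable (X i))
    (hjoint : ∀ x : Fin (n + 1) → ℕ,
      (μ {ω | ∀ i, X i ω = x i}).toReal
        = ∫ ω', ∏ i, (Real.exp (-(lam i * Θ i ω')) * (lam i * Θ i ω') ^ (x i)
            / (Nat.factorial (x i))) ∂μ')
    (S : Ω → ℕ) (hS : ∀ ω, S ω = ∑ i, X i ω)
    (t : ℝ) (ht : t ∈ Set.Icc (0 : ℝ) 1) :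
    ∑' k : ℕ, t ^ k * ∫ ω in {ω | S ω = k}, (X 0 ω : ℝ) ∂μ
      = lam 0 * t * ∫ ω', Θ 0 ω' * ∏ i, Real.exp (lam i * Θ i ω' * (t - 1)) ∂μ' := by
  obtain ⟨ht0, ht1⟩ := ht
  set a : Ω' → Fin (n + 1) → ℝ := fun ω' i => lam i * Θ i ω'
  have ha : ∀ ω' i, 0 ≤ a ω' i := fun ω' i => mul_nonneg (hlam i).le (hΘnn i ω')
  have hmixed : IsMixedPoisson (fun ω i => X i ω) μ a μ' := fun x => by
    rw [show (fun ω i => X i ω) ⁻¹' {x} = {ω | ∀ i, X i ω = x i} by ext; simp [funext_iff]]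
    exact hjoint x
  set F : Ω' → ℝ := fun ω' => Θ 0 ω' * ∏ i, Real.exp (lam i * Θ i ω' * (t - 1))
  have hF0 : ∀ ω', 0 ≤ F ω' := fun ω' =>
    mul_nonneg (hΘnn 0 ω') (Finset.prod_nonneg fun _ _ => (Real.exp_pos _).le)
  have hF : Integrable F μ' := hΘint.mul_prod_exp_of_nonpos (by fun_prop)
    fun i ω' => mul_nonpos_of_nonneg_of_nonpos (ha ω' i) (by linarith)
  have hE : ∫⁻ ω, ENNReal.ofReal (t ^ S ω) * X 0 ω ∂μ
      = ENNReal.ofReal (lam 0 * t * ∫ ω', F ω' ∂μ') := by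
    simp_rw [hS]
    rw [hmixed.lintegral_pow_sum_mul_apply ha (by fun_prop) (measurable_pi_lambda _ hX) ht0 0,
      ← integral_const_mul, ofReal_integral_eq_lintegral_ofReal (hF.const_mul _)
        (ae_of_all _ fun ω' => mul_nonneg (mul_nonneg (hlam 0).le ht0) (hF0 ω'))]
    refine lintegral_congr fun ω' => congrArg ENNReal.ofReal ?_
    simp only [a, F]
    ring
  have hSmeas : Measurable S := funext hS ▸ by fun_prop
  rw [tsum_pow_mul_setIntegral_eq_toReal_lintegral hSmeas (hX 0) ht0 (by rw [hE]; finiteness), hE,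
    ENNReal.toReal_ofReal (mul_nonneg (mul_nonneg (hlam 0).le ht0) (integral_nonneg hF0))]
end

section
/- Let Θ be a random variable with values in (0,∞), let r₁,…,rₙ ∈ (0,1) and b₁,…,bₙ ∈ ℕ⁺, and let (I₁,…,Iₙ) be a random vector with values in {0,1}ⁿ whose joint probability mass function is P(I₁=ε₁,…,Iₙ=εₙ) = E[∏_{i=1}^n (r_i^Θ)^{ε_i} (1−r_i^Θ)^{1−ε_i}] for (ε₁,…,εₙ) ∈ {0,1}ⁿ (i.e., conditionally on Θ the indicators are independent Bernoulli with success probabilities r_i^Θ). Set X_i = b_i · I_i and S = X₁+⋯+Xₙ. Then for every t with |t| ≤ 1, the probability generating function of S satisfies P_S(t) = E[∏_{i=1}^n (1 − r_i^Θ + r_i^Θ t^{b_i})], and the ordinary generating function of the expected allocations of X₁ satisfies ∑_{k=0}^∞ t^k · E[X₁ · 1_{\{S=k\}}] = E[b₁ · r₁^Θ · t^{b₁} · ∏_{i=2}^n (1 − r_i^Θ + r_i^Θ t^{b_i})]. -/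
/-!
Conditionally on `Θ` the indicators are independent Bernoulli variables with parameters
`p i = r i ^ Θ`, so the expectation of any product `∏ i, g i (I i)` is the mixture
`E'[∏ i, (g i 0 * (1 - p i) + g i 1 * p i)]`: expanding that product over `{0,1}ⁿ` reproduces
the joint pmf term by term. Both generating functions are of this form, since
`t ^ S = ∏ i, (t ^ b i) ^ I i`, and because `S` is bounded the generating function of the
allocations is the finite sum `E[t ^ S * b 0 * I 0]`.
-/

open MeasureTheory

theorem pow_sum_mul_eq_prod_pow {ι M : Type*} [CommMonoid M] (s : Finset ι) (b x : ι → ℕ)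
    (t : M) : t ^ (∑ i ∈ s, b i * x i) = ∏ i ∈ s, (t ^ b i) ^ x i := by
  simp_rw [← pow_mul, Finset.prod_pow_eq_pow_sum]

section FiniteRange

variable {Ω α : Type*} [MeasurableSpace Ω] {μ : Measure Ω} {X : Ω → α}

theorem integral_comp_eq_sum_setIntegral_preimage (t : Finset α) (hXt : ∀ ω, X ω ∈ t)
    (hX : ∀ a ∈ t, MeasurableSet (X ⁻¹' {a})) {h : α → Ω → ℝ}
    (hh : ∀ a ∈ t, IntegrableOn (h a) (X ⁻¹' {a}) μ) :
    ∫ ω, h (X ω) ω ∂μ = ∑ a ∈ t, ∫ ω in X ⁻¹' {a}, h a ω ∂μ := by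
  have hcover : ⋃ a ∈ t, X ⁻¹' {a} = Set.univ :=
    Set.eq_univ_of_forall fun ω => Set.mem_biUnion (hXt ω) rfl
  have hfiber : ∀ a ∈ t, Set.EqOn (h a) (fun ω => h (X ω) ω) (X ⁻¹' {a}) :=
    fun a _ ω hω => by simp only [show X ω = a from hω]
  calc ∫ ω, h (X ω) ω ∂μ = ∫ ω in ⋃ a ∈ t, X ⁻¹' {a}, h (X ω) ω ∂μ := by
        rw [hcover, Measure.restrict_univ]
    _ = ∑ a ∈ t, ∫ ω in X ⁻¹' {a}, h (X ω) ω ∂μ :=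
        integral_biUnion_finset t hX (Set.pairwiseDisjoint_fiber X _)
          fun a ha => (hh a ha).congr_fun (hfiber a ha) (hX a ha)
    _ = ∑ a ∈ t, ∫ ω in X ⁻¹' {a}, h a ω ∂μ :=
        Finset.sum_congr rfl fun a ha => (setIntegral_congr_fun (hX a ha) (hfiber a ha)).symm

theorem integral_comp_eq_sum_measureReal_preimage [IsFiniteMeasure μ] (t : Finset α)
    (hXt : ∀ ω, X ω ∈ t) (hX : ∀ a ∈ t, MeasurableSet (X ⁻¹' {a})) (f : α → ℝ) :
    ∫ ω, f (X ω) ∂μ = ∑ a ∈ t, f a * μ.real (X ⁻¹' {a}) := by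
  rw [integral_comp_eq_sum_setIntegral_preimage (h := fun a _ => f a) t hXt hX
    fun a _ => integrableOn_const]
  exact Finset.sum_congr rfl fun a _ => by rw [setIntegral_const, smul_eq_mul, mul_comm]

theorem tsum_mul_setIntegral_eq_integral {S : Ω → ℕ} (hS : Measurable S) {M : ℕ}
    (hSM : ∀ ω, S ω ≤ M) {f : Ω → ℝ} (hf : Integrable f μ) (c : ℕ → ℝ) :
    ∑' k, c k * ∫ ω in {ω | S ω = k}, f ω ∂μ = ∫ ω, c (S ω) * f ω ∂μ := by
  have hempty : ∀ k ∉ Finset.range (M + 1), {ω | S ω = k} = ∅ := fun k hk =>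
    Set.eq_empty_of_forall_notMem fun ω hω => hk <|
      Finset.mem_range_succ_iff.mpr (Set.mem_ofPred_eq.mp hω ▸ hSM ω)
  rw [tsum_eq_sum fun k hk => by rw [hempty k hk, setIntegral_empty, mul_zero],
    integral_comp_eq_sum_setIntegral_preimage (h := fun k ω => c k * f ω) _
      (fun ω => Finset.mem_range_succ_iff.mpr (hSM ω))
      (fun k _ => hS (measurableSet_singleton k)) fun k _ => (hf.const_mul _).integrableOn]
  exact Finset.sum_congr rfl fun k _ => (integral_const_mul _ _).symm

end FiniteRange

section MixedBernoulli

variable {Ω Ω' ι : Type*} [MeasurableSpace Ω] [MeasurableSpace Ω'] [Fintype ι]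

def IsBernoulliMixture (I : ι → Ω → ℕ) (μ : Measure Ω) (p : ι → Ω' → ℝ) (μ' : Measure Ω') :
    Prop :=
  ∀ ε : ι → ℕ, (∀ i, ε i ≤ 1) →
    (μ {ω | ∀ i, I i ω = ε i}).toReal = ∫ ω', ∏ i, (p i ω' ^ ε i * (1 - p i ω') ^ (1 - ε i)) ∂μ'

variable {μ : Measure Ω} {μ' : Measure Ω'} {I : ι → Ω → ℕ} {p : ι → Ω' → ℝ}

theorem integrable_prod_pow_mul_one_sub_pow [IsFiniteMeasure μ'] (hp : ∀ i, Measurable (p i))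
    (hp01 : ∀ i ω', p i ω' ∈ Set.Icc 0 1) (ε : ι → ℕ) :
    Integrable (fun ω' => ∏ i, (p i ω' ^ ε i * (1 - p i ω') ^ (1 - ε i))) μ' := by
  refine .of_bound (by fun_prop) 1 (.of_forall fun ω' => ?_)
  have hfactor : ∀ i, 0 ≤ p i ω' ^ ε i * (1 - p i ω') ^ (1 - ε i) ∧
      p i ω' ^ ε i * (1 - p i ω') ^ (1 - ε i) ≤ 1 := fun i => by
    obtain ⟨h0, h1⟩ := hp01 i ω'
    exact ⟨by positivity, mul_le_one₀ (pow_le_one₀ h0 h1) (by positivity)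
      (pow_le_one₀ (by linarith) (by linarith))⟩
  rw [Real.norm_of_nonneg (Finset.prod_nonneg fun i _ => (hfactor i).1)]
  exact Finset.prod_le_one (fun i _ => (hfactor i).1) fun i _ => (hfactor i).2

namespace IsBernoulliMixture

variable [IsFiniteMeasure μ] [IsFiniteMeasure μ']

theorem integral_prod [DecidableEq ι] (hmix : IsBernoulliMixture I μ p μ')
    (hI : ∀ i, Measurable (I i)) (hI01 : ∀ i ω, I i ω ≤ 1)
    (hp : ∀ i, Measurable (p i)) (hp01 : ∀ i ω', p i ω' ∈ Set.Icc 0 1) (g : ι → ℕ → ℝ) :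
    ∫ ω, ∏ i, g i (I i ω) ∂μ = ∫ ω', ∏ i, (g i 0 * (1 - p i ω') + g i 1 * p i ω') ∂μ' := by
  set T := Fintype.piFinset fun _ : ι => Finset.range 2
  have hT : ∀ ε ∈ T, ∀ i, ε i ≤ 1 := fun ε hε i =>
    Nat.lt_succ_iff.mp (Finset.mem_range.mp (Fintype.mem_piFinset.mp hε i))
  have hfiber : ∀ ε : ι → ℕ, (fun ω i => I i ω) ⁻¹' {ε} = {ω | ∀ i, I i ω = ε i} :=
    fun ε => Set.ext fun ω => funext_iff
  calc ∫ ω, ∏ i, g i (I i ω) ∂μ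
      = ∑ ε ∈ T, (∏ i, g i (ε i)) * μ.real ((fun ω i => I i ω) ⁻¹' {ε}) :=
        integral_comp_eq_sum_measureReal_preimage (f := fun ε => ∏ i, g i (ε i)) T
          (fun ω => Fintype.mem_piFinset.mpr fun i => Finset.mem_range_succ_iff.mpr (hI01 i ω))
          (fun ε _ => measurable_pi_lambda _ hI (measurableSet_singleton ε))
    _ = ∑ ε ∈ T, ∫ ω', (∏ i, g i (ε i)) *
          ∏ i, (p i ω' ^ ε i * (1 - p i ω') ^ (1 - ε i)) ∂μ' :=
        Finset.sum_congr rfl fun ε hε => by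
          rw [hfiber, measureReal_def, hmix ε (hT ε hε), integral_const_mul]
    _ = ∫ ω', ∑ ε ∈ T, (∏ i, g i (ε i)) *
          ∏ i, (p i ω' ^ ε i * (1 - p i ω') ^ (1 - ε i)) ∂μ' :=
        (integral_finsetSum _ fun ε _ =>
          (integrable_prod_pow_mul_one_sub_pow hp hp01 ε).const_mul _).symm
    _ = ∫ ω', ∏ i, ∑ e ∈ Finset.range 2, g i e * (p i ω' ^ e * (1 - p i ω') ^ (1 - e)) ∂μ' := by
        simp_rw [Finset.prod_univ_sum, Finset.prod_mul_distrib]; rfl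
    _ = ∫ ω', ∏ i, (g i 0 * (1 - p i ω') + g i 1 * p i ω') ∂μ' := by
        simp [Finset.sum_range_succ]

theorem integral_pow_sum [DecidableEq ι] (hmix : IsBernoulliMixture I μ p μ')
    (hI : ∀ i, Measurable (I i)) (hI01 : ∀ i ω, I i ω ≤ 1)
    (hp : ∀ i, Measurable (p i)) (hp01 : ∀ i ω', p i ω' ∈ Set.Icc 0 1) (b : ι → ℕ) (t : ℝ) :
    ∫ ω, t ^ (∑ i, b i * I i ω) ∂μ = ∫ ω', ∏ i, (1 - p i ω' + p i ω' * t ^ b i) ∂μ' := by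
  simp_rw [pow_sum_mul_eq_prod_pow, hmix.integral_prod hI hI01 hp hp01]
  congr with ω'
  exact Finset.prod_congr rfl fun i _ => by ring

theorem integral_pow_sum_mul_zero {n : ℕ} {I : Fin (n + 1) → Ω → ℕ} {p : Fin (n + 1) → Ω' → ℝ}
    (hmix : IsBernoulliMixture I μ p μ')
    (hI : ∀ i, Measurable (I i)) (hI01 : ∀ i ω, I i ω ≤ 1)
    (hp : ∀ i, Measurable (p i)) (hp01 : ∀ i ω', p i ω' ∈ Set.Icc 0 1)
    (b : Fin (n + 1) → ℕ) (t : ℝ) :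
    ∫ ω, t ^ (∑ i, b i * I i ω) * (b 0 * I 0 ω) ∂μ
      = ∫ ω', b 0 * p 0 ω' * t ^ b 0 *
          ∏ i : Fin n, (1 - p i.succ ω' + p i.succ ω' * t ^ b i.succ) ∂μ' := by
  let g : Fin (n + 1) → ℕ → ℝ :=
    Fin.cons (fun e => b 0 * e * (t ^ b 0) ^ e) fun i e => (t ^ b i.succ) ^ e
  have hg : ∀ ω, t ^ (∑ i, b i * I i ω) * (b 0 * I 0 ω) = ∏ i, g i (I i ω) := fun ω => by
    rw [pow_sum_mul_eq_prod_pow, Fin.prod_univ_succ, Fin.prod_univ_succ]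
    simp only [g, Fin.cons_zero, Fin.cons_succ]
    ring
  have hsucc : ∀ (i : Fin n) ω', g i.succ 0 * (1 - p i.succ ω') + g i.succ 1 * p i.succ ω'
      = 1 - p i.succ ω' + p i.succ ω' * t ^ b i.succ := fun i ω' => by
    simp only [g, Fin.cons_succ]
    ring
  simp_rw [hg, hmix.integral_prod hI hI01 hp hp01, Fin.prod_univ_succ, hsucc]
  congr with ω'
  simp only [g, Fin.cons_zero]
  ring

end IsBernoulliMixture

end MixedBernoulli

theorem pgf_and_ogf_allocation_frailty_bernoulli_general
    {Ω Ω' : Type*} [MeasurableSpace Ω] [MeasurableSpace Ω']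
    (μ : Measure Ω) (μ' : Measure Ω')
    [IsProbabilityMeasure μ] [IsProbabilityMeasure μ']
    (Θ : Ω' → ℝ) (hΘ : Measurable Θ) (hΘpos : ∀ ω', 0 < Θ ω')
    (n : ℕ) (r : Fin (n + 1) → ℝ) (hr : ∀ i, r i ∈ Set.Ioo (0 : ℝ) 1)
    (b : Fin (n + 1) → ℕ)
    (I : Fin (n + 1) → Ω → ℕ) (hI : ∀ i, Measurable (I i))
    (hI01 : ∀ i ω, I i ω ≤ 1)
    (hjoint : ∀ ε : Fin (n + 1) → ℕ, (∀ i, ε i ≤ 1) →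
      (μ {ω | ∀ i, I i ω = ε i}).toReal
        = ∫ ω', ∏ i, ((r i ^ Θ ω') ^ (ε i) * (1 - r i ^ Θ ω') ^ (1 - ε i)) ∂μ')
    (S : Ω → ℕ) (hS : ∀ ω, S ω = ∑ i, b i * I i ω)
    (t : ℝ) :
    (∫ ω, t ^ (S ω) ∂μ
      = ∫ ω', ∏ i, (1 - r i ^ Θ ω' + r i ^ Θ ω' * t ^ (b i)) ∂μ')
    ∧ (∑' k : ℕ, t ^ k * ∫ ω in {ω | S ω = k}, ((b 0 : ℝ) * (I 0 ω : ℝ)) ∂μ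
      = ∫ ω', (b 0 : ℝ) * r 0 ^ Θ ω' * t ^ (b 0) *
          ∏ i : Fin n, (1 - r i.succ ^ Θ ω' + r i.succ ^ Θ ω' * t ^ (b i.succ)) ∂μ') := by
  obtain rfl : S = fun ω => ∑ i, b i * I i ω := funext hS
  have hmix : IsBernoulliMixture I μ (fun i ω' => r i ^ Θ ω') μ' := hjoint
  have hp : ∀ i, Measurable fun ω' => r i ^ Θ ω' := fun i => measurable_const.pow hΘ
  have hp01 : ∀ i ω', r i ^ Θ ω' ∈ Set.Icc 0 1 := fun i ω' =>
    ⟨Real.rpow_nonneg (hr i).1.le _, Real.rpow_le_one (hr i).1.le (hr i).2.le (hΘpos ω').le⟩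
  have hSM : ∀ ω, ∑ i, b i * I i ω ≤ ∑ i, b i := fun ω =>
    Finset.sum_le_sum fun i _ => mul_le_of_le_one_right (Nat.zero_le _) (hI01 i ω)
  have hX0 : Integrable (fun ω => (b 0 : ℝ) * (I 0 ω : ℝ)) μ :=
    (Integrable.of_bound (by fun_prop) 1 (.of_forall fun ω => by
      simpa using hI01 0 ω)).const_mul _
  refine ⟨hmix.integral_pow_sum hI hI01 hp hp01 b t, ?_⟩
  rw [tsum_mul_setIntegral_eq_integral (by fun_prop) hSM hX0]
  exact hmix.integral_pow_sum_mul_zero hI hI01 hp hp01 b t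

/-- For the frailty (Archimedean copula) Bernoulli model: `Θ > 0` is a mixing
random variable, `r_i ∈ (0,1)`, `b_i ∈ ℕ⁺`, and `(I₁,…,Iₙ)` has joint pmf
`P(I = ε) = E[∏_i (r_i^Θ)^{ε_i}(1 - r_i^Θ)^{1-ε_i}]` on `{0,1}ⁿ`. With `X_i = b_i I_i` and
`S = X₁+⋯+Xₙ`, for every `t` with `|t| ≤ 1`:
`P_S(t) = E[∏_i (1 - r_i^Θ + r_i^Θ t^{b_i})]` and
`∑_k t^k E[X₁ · 1_{S=k}] = E[b₁ r₁^Θ t^{b₁} ∏_{i=2}^n (1 - r_i^Θ + r_i^Θ t^{b_i})]`. -/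
theorem pgf_and_ogf_allocation_frailty_bernoulli
    {Ω Ω' : Type*} [MeasurableSpace Ω] [MeasurableSpace Ω']
    (μ : Measure Ω) (μ' : Measure Ω')
    [IsProbabilityMeasure μ] [IsProbabilityMeasure μ']
    (Θ : Ω' → ℝ) (hΘ : Measurable Θ) (hΘpos : ∀ ω', 0 < Θ ω')
    (n : ℕ) (r : Fin (n + 1) → ℝ) (hr : ∀ i, r i ∈ Set.Ioo (0 : ℝ) 1)
    (b : Fin (n + 1) → ℕ) (hb : ∀ i, 0 < b i)
    (I : Fin (n + 1) → Ω → ℕ) (hI : ∀ i, Measurable (I i))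
    (hI01 : ∀ i ω, I i ω ≤ 1)
    (hjoint : ∀ ε : Fin (n + 1) → ℕ, (∀ i, ε i ≤ 1) →
      (μ {ω | ∀ i, I i ω = ε i}).toReal
        = ∫ ω', ∏ i, ((r i ^ Θ ω') ^ (ε i) * (1 - r i ^ Θ ω') ^ (1 - ε i)) ∂μ')
    (S : Ω → ℕ) (hS : ∀ ω, S ω = ∑ i, b i * I i ω)
    (t : ℝ) (ht : |t| ≤ 1) :
    (∫ ω, t ^ (S ω) ∂μ
      = ∫ ω', ∏ i, (1 - r i ^ Θ ω' + r i ^ Θ ω' * t ^ (b i)) ∂μ')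
    ∧ (∑' k : ℕ, t ^ k * ∫ ω in {ω | S ω = k}, ((b 0 : ℝ) * (I 0 ω : ℝ)) ∂μ
      = ∫ ω', (b 0 : ℝ) * r 0 ^ Θ ω' * t ^ (b 0) *
          ∏ i : Fin n, (1 - r i.succ ^ Θ ω' + r i.succ ^ Θ ω' * t ^ (b i.succ)) ∂μ') :=
  pgf_and_ogf_allocation_frailty_bernoulli_general μ μ' Θ hΘ hΘpos n r hr b I hI hI01 hjoint S hS t
end
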